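/- arXiv:1903.06426 — 6 statements merged into one kernel-verified Lean document; each statement's English description precedes it below -/
import Mathlib

section
/- For every n ≥ 1, the map f from the partition lattice P_n to the lattice of 𝔽_2-subspaces of 𝔽_2^{n−1} is a rank-preserving poset embedding: (i) if π ≤ σ in refinement order then f(π) ⊆ f(σ); (ii) f is injective; and (iii) dim_{𝔽_2} f(π) = n − (number of blocks of π) for every partition π. -/
/-!
Write `W_π ⊆ 𝔽₂ⁿ` for the span of the differences `e_i - e_j` of indices in a common block.
It is the kernel of the surjective map `𝔽₂ⁿ → 𝔽₂^{blocks}` summing the coordinates over each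
block, so `dim W_π = n - #blocks`, and `e_i - e_j ∈ W_π` exactly when `i` and `j` share a block.
The space `f(π)` is the image of `W_π` under forgetting the last coordinate, which is injective
on vectors with coordinate sum zero (the last coordinate is minus the sum of the others); so
both facts pass to `f(π)`, giving injectivity and the rank formula.
-/

/-- The vector `e_i ∈ 𝔽₂ⁿ⁻¹` for `i` among the first `n-1` indices, and `0` for the
last index (`e_n := 0`). -/
def unitVec (n : ℕ) (i : Fin n) : Fin (n - 1) → ZMod 2 :=
  fun k => if (k : ℕ) = (i : ℕ) then 1 else 0

/-- The subspace of `𝔽₂ⁿ⁻¹` associated to a set partition of `{1, …, n}`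
(encoded as a `Setoid` on `Fin n`): the span of the partition vectors
`e_i + e_j` over all pairs `i < j` lying in a common block. -/
def partSubspace (n : ℕ) (π : Setoid (Fin n)) :
    Submodule (ZMod 2) (Fin (n - 1) → ZMod 2) :=
  Submodule.span (ZMod 2)
    {x | ∃ i j : Fin n, i < j ∧ π.r i j ∧ x = unitVec n i + unitVec n j}

namespace Setoid

variable {ι : Type*} [DecidableEq ι]

def blockDiffSpan (R : Type*) [CommRing R] (s : Setoid ι) : Submodule R (ι → R) :=
  Submodule.span R {x | ∃ i j, s.r i j ∧ x = Pi.single i 1 - Pi.single j 1}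

theorem blockDiffSpan_mono {R : Type*} [CommRing R] {s t : Setoid ι} (h : s ≤ t) :
    blockDiffSpan R s ≤ blockDiffSpan R t :=
  Submodule.span_mono fun _ ⟨i, j, hij, hx⟩ => ⟨i, j, h hij, hx⟩

variable [Fintype ι]

section CommRing

variable (R : Type*) [CommRing R] (s : Setoid ι) [DecidableEq (Quotient s)]

def blockSum : (ι → R) →ₗ[R] (Quotient s → R) :=
  Fintype.linearCombination R fun i => Pi.single ⟦i⟧ 1

noncomputable def blockRep [Fintype (Quotient s)] : (Quotient s → R) →ₗ[R] (ι → R) :=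
  Fintype.linearCombination R fun q => Pi.single q.out 1

variable {R s}

theorem blockSum_single (i : ι) : blockSum R s (Pi.single i 1) = Pi.single ⟦i⟧ 1 := by
  rw [blockSum, Fintype.linearCombination_apply_single, one_smul]

variable [Fintype (Quotient s)]

theorem blockSum_comp_blockRep : blockSum R s ∘ₗ blockRep R s = LinearMap.id := by
  refine (Pi.basisFun R (Quotient s)).ext fun q => ?_
  simp [blockRep, Fintype.linearCombination_apply_single, blockSum_single]

theorem blockSum_surjective : Function.Surjective (blockSum R s) := fun y =>
  ⟨blockRep R s y, LinearMap.congr_fun blockSum_comp_blockRep y⟩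

theorem ker_blockSum : LinearMap.ker (blockSum R s) = blockDiffSpan R s := by
  refine le_antisymm (fun x hx => ?_) ?_
  · have hdecomp : x - blockRep R s (blockSum R s x) =
        ∑ i, x i • (Pi.single i 1 - Pi.single (⟦i⟧ : Quotient s).out 1) := by
      conv_lhs => rw [pi_eq_sum_univ' x]
      simp [blockRep, blockSum_single, Fintype.linearCombination_apply_single, smul_sub,
        Finset.sum_sub_distrib]
    rw [LinearMap.mem_ker.1 hx, map_zero, sub_zero] at hdecomp
    rw [hdecomp]
    exact Submodule.sum_mem _ fun i _ => Submodule.smul_mem _ _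
      (Submodule.subset_span ⟨i, _, Setoid.symm (Quotient.mk_out i), rfl⟩)
  · rw [blockDiffSpan, Submodule.span_le]
    rintro _ ⟨i, j, hij, rfl⟩
    simp [blockSum_single, Quotient.sound hij]

end CommRing

variable {R : Type*} [CommRing R] {s : Setoid ι}

theorem single_sub_single_mem_blockDiffSpan_iff [Nontrivial R] {i j : ι} :
    Pi.single i 1 - Pi.single j 1 ∈ blockDiffSpan R s ↔ s.r i j := by
  classical
  rw [← ker_blockSum, LinearMap.mem_ker, map_sub, blockSum_single, blockSum_single, sub_eq_zero]
  refine ⟨fun h => Quotient.exact ?_, fun h => by rw [Quotient.sound h]⟩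
  simpa [Pi.single_apply, eq_comm] using congr_fun h ⟦i⟧

theorem sum_eq_zero_of_mem_blockDiffSpan {x : ι → R} (hx : x ∈ blockDiffSpan R s) :
    ∑ i, x i = 0 := by
  suffices blockDiffSpan R s ≤ LinearMap.ker (∑ i, LinearMap.proj i) by
    simpa using this hx
  rw [blockDiffSpan, Submodule.span_le]
  rintro _ ⟨i, j, -, rfl⟩
  simp

theorem finrank_blockDiffSpan (K : Type*) [Field K] (s : Setoid ι) :
    Module.finrank K (blockDiffSpan K s) = Fintype.card ι - Nat.card (Quotient s) := by
  classical
  have h := (blockSum K s).finrank_range_add_finrank_ker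
  rw [LinearMap.range_eq_top.2 blockSum_surjective, finrank_top, ker_blockSum,
    Module.finrank_fintype_fun_eq_card, Module.finrank_fintype_fun_eq_card] at h
  rw [Nat.card_eq_fintype_card]
  omega

end Setoid

open Setoid

section DropLast

variable (R : Type*) [CommRing R] (n : ℕ)

def dropLast : (Fin n → R) →ₗ[R] (Fin (n - 1) → R) :=
  LinearMap.funLeft R R (Fin.castLE (Nat.sub_le n 1))

variable {R n}

theorem eq_zero_of_dropLast_eq_zero {x : Fin n → R} (h : dropLast R n x = 0)
    (hsum : ∑ i, x i = 0) : x = 0 := by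
  have hinit : ∀ i : Fin n, (i : ℕ) < n - 1 → x i = 0 := fun i hi => congr_fun h ⟨i, hi⟩
  refine funext fun i => ?_
  by_cases hi : (i : ℕ) < n - 1
  · exact hinit i hi
  · exact (Finset.sum_eq_single i (fun j _ hji => hinit j (by omega)) (by simp)).symm.trans hsum

theorem disjoint_blockDiffSpan_ker_dropLast (s : Setoid (Fin n)) :
    Disjoint (blockDiffSpan R s) (LinearMap.ker (dropLast R n)) :=
  Submodule.disjoint_def.2 fun _ hx hker =>
    eq_zero_of_dropLast_eq_zero hker (sum_eq_zero_of_mem_blockDiffSpan hx)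

theorem dropLast_mem_map_blockDiffSpan_iff {s : Setoid (Fin n)} {x : Fin n → R}
    (hx : ∑ i, x i = 0) :
    dropLast R n x ∈ (blockDiffSpan R s).map (dropLast R n) ↔ x ∈ blockDiffSpan R s := by
  refine ⟨fun ⟨y, hy, hxy⟩ => ?_, Submodule.mem_map_of_mem⟩
  have hsum : ∑ i, (x - y) i = 0 := by
    simp [Finset.sum_sub_distrib, hx, sum_eq_zero_of_mem_blockDiffSpan hy]
  have := eq_zero_of_dropLast_eq_zero (by rw [map_sub, hxy, sub_self]) hsum
  rwa [sub_eq_zero.1 this]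

theorem finrank_map_dropLast_blockDiffSpan (K : Type*) [Field K] (s : Setoid (Fin n)) :
    Module.finrank K ((blockDiffSpan K s).map (dropLast K n)) =
      Module.finrank K (blockDiffSpan K s) := by
  rw [← LinearMap.range_domRestrict,
    LinearMap.finrank_range_of_inj (LinearMap.injective_domRestrict_iff.2
      (disjoint_blockDiffSpan_ker_dropLast s))]

end DropLast

theorem unitVec_add_unitVec (n : ℕ) (i j : Fin n) :
    unitVec n i + unitVec n j = dropLast (ZMod 2) n (Pi.single i 1 - Pi.single j 1) := by
  have hunit : ∀ k : Fin n, unitVec n k = dropLast (ZMod 2) n (Pi.single k 1) := by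
    intro k
    ext m
    simp [unitVec, dropLast, Pi.single_apply, Fin.ext_iff]
  rw [sub_eq_add_neg, map_add, map_neg, hunit, hunit, ZModModule.neg_eq_self]

theorem partSubspace_eq_map (n : ℕ) (π : Setoid (Fin n)) :
    partSubspace n π = (blockDiffSpan (ZMod 2) π).map (dropLast (ZMod 2) n) := by
  rw [blockDiffSpan, Submodule.map_span, partSubspace]
  apply le_antisymm <;> rw [Submodule.span_le]
  · rintro _ ⟨i, j, -, hij, rfl⟩
    exact Submodule.subset_span ⟨_, ⟨i, j, hij, rfl⟩, (unitVec_add_unitVec n i j).symm⟩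
  · rintro _ ⟨_, ⟨i, j, hij, rfl⟩, rfl⟩
    rcases lt_trichotomy i j with h | rfl | h
    · exact Submodule.subset_span ⟨i, j, h, hij, (unitVec_add_unitVec n i j).symm⟩
    · simp
    · rw [← neg_sub, map_neg]
      exact Submodule.neg_mem _
        (Submodule.subset_span ⟨j, i, h, π.symm hij, (unitVec_add_unitVec n j i).symm⟩)

theorem unitVec_add_unitVec_mem_partSubspace_iff {n : ℕ} {π : Setoid (Fin n)} {i j : Fin n} :
    unitVec n i + unitVec n j ∈ partSubspace n π ↔ π.r i j := by
  rw [partSubspace_eq_map, unitVec_add_unitVec, dropLast_mem_map_blockDiffSpan_iff (by simp),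
    single_sub_single_mem_blockDiffSpan_iff]

theorem partitionLattice_embedding_general (n : ℕ) :
    (∀ π σ : Setoid (Fin n), π ≤ σ → partSubspace n π ≤ partSubspace n σ) ∧
      Function.Injective (partSubspace n) ∧
      ∀ π : Setoid (Fin n),
        Module.finrank (ZMod 2) (partSubspace n π) = n - Nat.card (Quotient π) := by
  refine ⟨fun π σ h => ?_, fun π σ h => ?_, fun π => ?_⟩
  · simpa only [partSubspace_eq_map] using Submodule.map_mono (blockDiffSpan_mono h)
  · ext i j
    rw [← unitVec_add_unitVec_mem_partSubspace_iff, h, unitVec_add_unitVec_mem_partSubspace_iff]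
  · rw [partSubspace_eq_map, finrank_map_dropLast_blockDiffSpan, finrank_blockDiffSpan,
      Fintype.card_fin]

/-- The map from the partition lattice `Pₙ` (partitions of `{1, …, n}` ordered by
refinement) to the lattice of subspaces of `𝔽₂ⁿ⁻¹` is a rank-preserving poset
embedding: it is order-preserving, injective, and the dimension of the image of a
partition `π` is `n` minus the number of blocks of `π`. -/
theorem partitionLattice_embedding (n : ℕ) (hn : 1 ≤ n) :
    (∀ π σ : Setoid (Fin n), π ≤ σ → partSubspace n π ≤ partSubspace n σ) ∧
      Function.Injective (partSubspace n) ∧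
      ∀ π : Setoid (Fin n),
        Module.finrank (ZMod 2) (partSubspace n π) = n - Nat.card (Quotient π) :=
  partitionLattice_embedding_general n
end

section
/- Let n ≥ 1 and let Φ⁺ := {e_i − e_j : 1 ≤ i < j ≤ n} ∪ {e_i + e_j : 1 ≤ i < j ≤ n} ∪ {e_i : 1 ≤ i ≤ n} ⊆ ℤ^n, where e_1, …, e_n is the standard basis of ℤ^n. Then every prime p ≠ 2 is compatible with Φ⁺: every subset B ⊆ Φ⁺ that is a ℚ-basis of ℚ^n reduces coordinatewise modulo p to an 𝔽_p-basis of 𝔽_p^n. -/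
/-- Coordinatewise reduction modulo `p` of an integer vector. -/
def modRed (n p : ℕ) (v : Fin n → ℤ) : Fin n → ZMod p := fun k => (v k : ZMod p)

/-- The rational vector corresponding to an integer vector. -/
def ratVec (n : ℕ) (v : Fin n → ℤ) : Fin n → ℚ := fun k => (v k : ℚ)

/-- A prime `p` is compatible with a set `Φ ⊆ ℤⁿ` if every subset of `Φ` that is a
`ℚ`-basis of `ℚⁿ` reduces modulo `p` to an `𝔽ₚ`-basis of `𝔽ₚⁿ`. -/
def CompatiblePrime (n p : ℕ) (Φ : Set (Fin n → ℤ)) : Prop :=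
  ∀ B : Set (Fin n → ℤ), B ⊆ Φ →
    (LinearIndependent ℚ (fun v : B => ratVec n v.1) ∧
        Submodule.span ℚ (Set.range fun v : B => ratVec n v.1) = ⊤) →
      LinearIndependent (ZMod p) (fun v : B => modRed n p v.1) ∧
        Submodule.span (ZMod p) (Set.range fun v : B => modRed n p v.1) = ⊤

/-- The standard basis vector `e_i` of `ℤⁿ`. -/
def stdZ (n : ℕ) (i : Fin n) : Fin n → ℤ := fun k => if k = i then 1 else 0

/-- The set of positive roots of type `B`:
`Φ⁺ = {e_i − e_j : i < j} ∪ {e_i + e_j : i < j} ∪ {e_i}`. -/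
def PhiB (n : ℕ) : Set (Fin n → ℤ) :=
  {x | ∃ i j : Fin n, i < j ∧ x = stdZ n i - stdZ n j} ∪
    {x | ∃ i j : Fin n, i < j ∧ x = stdZ n i + stdZ n j} ∪
    {x | ∃ i : Fin n, x = stdZ n i}

/-!
If the reduction of `B` does not span `𝔽ₚⁿ`, some nonzero `g ∈ 𝔽ₚⁿ` is orthogonal to it, i.e.
`gᵢ = gⱼ`, `gᵢ = -gⱼ` or `gᵢ = 0` for each root `eᵢ - eⱼ`, `eᵢ + eⱼ`, `eᵢ` in `B`. Any odd function
`χ : 𝔽ₚ → ℚ` preserves these relations, so `χ ∘ g` is orthogonal to `B` over `ℚ`. Since `p` is odd,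
`gᵢ ≠ -gᵢ` whenever `gᵢ ≠ 0`, so `χ` can be chosen with `χ gᵢ = 1`, contradicting that `B` spans
`ℚⁿ`. Linear independence then follows by counting.
-/

open Matrix Submodule

theorem span_eq_top_iff_forall_dotProduct_eq_zero {K ι : Type*} [Field K] [Fintype ι]
    [DecidableEq ι] {s : Set (ι → K)} :
    span K s = ⊤ ↔ ∀ x : ι → K, (∀ v ∈ s, x ⬝ᵥ v = 0) → x = 0 := by
  rw [← dualAnnihilator_eq_bot_iff, eq_bot_iff, SetLike.le_def]
  refine (dotProductEquiv K ι).symm.toEquiv.forall_congr_left.trans (forall_congr' fun x => ?_)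
  rw [← SetLike.mem_coe, coe_dualAnnihilator_span, mem_bot]
  simp [Set.subset_def]

theorem linearIndependent_of_span_eq_top_of_isBasis {K L ι m : Type*} [Field K] [Field L]
    [Fintype m] {v : ι → m → K} {w : ι → m → L} (hv : LinearIndependent K v)
    (hv_span : span K (Set.range v) = ⊤) (hw_span : span L (Set.range w) = ⊤) :
    LinearIndependent L w := by
  let b := Module.Basis.mk hv hv_span.ge
  have : Finite ι := Module.Finite.finite_basis b
  have : Fintype ι := Fintype.ofFinite ι
  refine linearIndependent_of_top_le_span_of_card_eq_finrank hw_span.ge ?_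
  rw [← Module.finrank_eq_card_basis b, Module.finrank_fintype_fun_eq_card,
    Module.finrank_fintype_fun_eq_card]

theorem neg_ne_self_of_ringChar_ne_two {R : Type*} [Ring R] [NoZeroDivisors R]
    (hR : ringChar R ≠ 2) {t : R} (ht : t ≠ 0) : -t ≠ t := by
  have : Nontrivial R := nontrivial_of_ne t 0 ht
  rw [Ne, neg_eq_iff_add_eq_zero, ← two_mul]
  exact mul_ne_zero (Ring.two_ne_zero hR) ht

theorem exists_odd_eq_one {R : Type*} [InvolutiveNeg R] {t : R} (ht : -t ≠ t) :
    ∃ χ : R → ℚ, χ.Odd ∧ χ t = 1 := by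
  classical
  refine ⟨fun s => if s = t then 1 else if s = -t then -1 else 0, fun s => ?_, if_pos rfl⟩
  by_cases hs : s = t
  · subst hs; simp [ht]
  by_cases hs' : s = -t
  · subst hs'; simp [ht]
  · simp [hs, hs', neg_eq_iff_eq_neg]

section PhiB

variable {n : ℕ} {R : Type*} [Ring R]

theorem dotProduct_intCast_stdZ (g : Fin n → R) (i : Fin n) :
    g ⬝ᵥ (fun k => (stdZ n i k : R)) = g i := by
  simp [stdZ, dotProduct, apply_ite (Int.cast : ℤ → R)]

theorem dotProduct_intCast_stdZ_sub (g : Fin n → R) (i j : Fin n) :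
    g ⬝ᵥ (fun k => ((stdZ n i - stdZ n j) k : R)) = g i - g j := by
  simp [stdZ, dotProduct, apply_ite (Int.cast : ℤ → R), mul_sub, Finset.sum_sub_distrib]

theorem dotProduct_intCast_stdZ_add (g : Fin n → R) (i j : Fin n) :
    g ⬝ᵥ (fun k => ((stdZ n i + stdZ n j) k : R)) = g i + g j := by
  simp [stdZ, dotProduct, apply_ite (Int.cast : ℤ → R), mul_add, Finset.sum_add_distrib]

theorem odd_comp_dotProduct_eq_zero_of_mem_PhiB {S : Type*} [Ring S] [IsAddTorsionFree S]
    {χ : R → S} (hχ : χ.Odd) {g : Fin n → R} {b : Fin n → ℤ} (hb : b ∈ PhiB n)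
    (hg : g ⬝ᵥ (fun k => (b k : R)) = 0) : (χ ∘ g) ⬝ᵥ (fun k => (b k : S)) = 0 := by
  simp only [PhiB, Set.mem_union, Set.mem_ofPred_eq] at hb
  rcases hb with (⟨i, j, -, rfl⟩ | ⟨i, j, -, rfl⟩) | ⟨i, rfl⟩
  · rw [dotProduct_intCast_stdZ_sub] at hg ⊢
    simp [sub_eq_zero.mp hg]
  · rw [dotProduct_intCast_stdZ_add] at hg ⊢
    simp [eq_neg_of_add_eq_zero_left hg, hχ.eq]
  · rw [dotProduct_intCast_stdZ] at hg ⊢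
    simp [hg, hχ.map_zero]

theorem span_modRed_eq_top_of_subset_PhiB {p : ℕ} [Fact p.Prime] (hp2 : p ≠ 2)
    {B : Set (Fin n → ℤ)} (hB : B ⊆ PhiB n)
    (hspan : span ℚ (Set.range fun v : B => ratVec n v.1) = ⊤) :
    span (ZMod p) (Set.range fun v : B => modRed n p v.1) = ⊤ := by
  rw [span_eq_top_iff_forall_dotProduct_eq_zero] at hspan ⊢
  simp only [Set.forall_mem_range, Subtype.forall] at hspan ⊢
  intro g hg
  by_contra hg0
  obtain ⟨i, hi⟩ := Function.ne_iff.mp hg0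
  have hchar : ringChar (ZMod p) ≠ 2 := (ZMod.ringChar_zmod_n p).trans_ne hp2
  obtain ⟨χ, hχ, hχi⟩ := exists_odd_eq_one (neg_ne_self_of_ringChar_ne_two hchar hi)
  have hχg := hspan (χ ∘ g) fun b hb =>
    odd_comp_dotProduct_eq_zero_of_mem_PhiB hχ (hB hb) (hg b hb)
  simpa [hχi] using congr_fun hχg i

end PhiB

theorem every_odd_prime_compatible_typeB_general (n : ℕ) (p : ℕ)
    (hp : p.Prime) (hp2 : p ≠ 2) :
    CompatiblePrime n p (PhiB n) := by
  have : Fact p.Prime := ⟨hp⟩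
  rintro B hB ⟨hind, hspan⟩
  have hspan_p := span_modRed_eq_top_of_subset_PhiB hp2 hB hspan
  exact ⟨linearIndependent_of_span_eq_top_of_isBasis hind hspan hspan_p, hspan_p⟩

/-- Every odd prime is compatible with the root set of type `B`. -/
theorem every_odd_prime_compatible_typeB (n : ℕ) (hn : 1 ≤ n) (p : ℕ)
    (hp : p.Prime) (hp2 : p ≠ 2) :
    CompatiblePrime n p (PhiB n) :=
  every_odd_prime_compatible_typeB_general n p hp hp2
end

section
/- Let n ≥ 2. Define a bilinear form b_A on ℚ^{n−1} by b_A(e_i, e_j) = 1 if i ≤ j and b_A(e_i, e_j) = 0 if i > j, for 1 ≤ i, j ≤ n−1. For a transposition t = (i j) of S_n with i < j, set α_t := e_i − e_j ∈ ℚ^{n−1} if j < n and α_t := e_i if j = n. Then for all distinct transpositions s, t of S_n such that st ≤ (1 2 … n) in the absolute order, b_A(α_s, α_t) = 0. -/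
/-- The absolute length of `w` with respect to a set `T`:
the least `k` such that `w` is a product of `k` elements of `T`. -/
noncomputable def absLength {G : Type*} [Group G] (T : Set G) (w : G) : ℕ :=
  sInf {k : ℕ | ∃ l : List G, l.length = k ∧ (∀ t ∈ l, t ∈ T) ∧ l.prod = w}

/-- The absolute order with respect to `T` : `u ≤ w` iff `ℓ(w) = ℓ(u) + ℓ(u⁻¹w)`. -/
def absLe {G : Type*} [Group G] (T : Set G) (u w : G) : Prop :=
  absLength T w = absLength T u + absLength T (u⁻¹ * w)

/-- The vector `e_i ∈ ℚⁿ⁻¹` for `i` among the first `n-1` indices, and `0` for the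
last index (`e_n := 0`). -/
def vecQ (n : ℕ) (i : Fin n) : Fin (n - 1) → ℚ :=
  fun k => if (k : ℕ) = (i : ℕ) then 1 else 0

/-- The bilinear form `b_A` on `ℚⁿ⁻¹` with `b_A(e_i, e_j) = 1` if `i ≤ j` and
`b_A(e_i, e_j) = 0` if `i > j`. -/
def bA (n : ℕ) (x y : Fin (n - 1) → ℚ) : ℚ :=
  ∑ i : Fin (n - 1), ∑ j : Fin (n - 1), if i ≤ j then x i * y j else 0

/-!
Write `c = (1 2 … n)`. If neither or both of `k, l` lie in `[i, j)`, then `b_A(α_s, α_t) = 0`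
follows from `b_A(e_a, e_b) = [a ≤ b]` (with `e_n = 0`). Otherwise the two transpositions cross,
and then `t s c` is again an `n`-cycle, so every function `v` with `v ∘ (t s c) = v` is constant.
This contradicts `s t ≤ c`: since `s t ≠ 1` and `ℓ(c) ≤ n - 1`, the permutation `(s t)⁻¹ c = t s c`
is a product of at most `n - 2` transpositions, and `v ↦ v ∘ σ - v` has rank at most one for a
transposition `σ`, so the functions invariant under `t s c` form a space of dimension at least 2.
-/

open Equiv

section AbsLength

variable {G : Type*} [Group G] {T : Set G}

theorem absLength_list_prod_le {l : List G} (hl : ∀ t ∈ l, t ∈ T) :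
    absLength T l.prod ≤ l.length :=
  Nat.sInf_le ⟨l, rfl, hl, rfl⟩

theorem exists_length_eq_absLength {w : G} (hw : w ∈ Submonoid.closure T) :
    ∃ l : List G, l.length = absLength T w ∧ (∀ t ∈ l, t ∈ T) ∧ l.prod = w := by
  obtain ⟨l, hl, rfl⟩ := Submonoid.exists_list_of_mem_closure hw
  exact Nat.sInf_mem (s := {k | ∃ l' : List G, l'.length = k ∧ (∀ t ∈ l', t ∈ T) ∧ l'.prod = _})
    ⟨l.length, l, rfl, hl, rfl⟩

theorem absLength_pos {w : G} (hw : w ∈ Submonoid.closure T) (h1 : w ≠ 1) :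
    0 < absLength T w := by
  obtain ⟨l, hlen, -, rfl⟩ := exists_length_eq_absLength hw
  rw [← hlen, List.length_pos_iff]
  rintro rfl
  exact h1 List.prod_nil

end AbsLength

theorem absLength_formPerm_le {α : Type*} [DecidableEq α] {l : List α} (hl : l.Nodup) :
    absLength {σ : Perm α | σ.IsSwap} l.formPerm ≤ l.length - 1 := by
  have hswap : ∀ t ∈ List.zipWith swap l l.tail, t ∈ {σ : Perm α | σ.IsSwap} := by
    intro t ht
    obtain ⟨r, hr, rfl⟩ := List.getElem_of_mem ht
    simp only [List.length_zipWith, List.length_tail] at hr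
    refine show Perm.IsSwap _ from ⟨l[r], l[r + 1], ?_, by simp⟩
    rw [Ne, hl.getElem_inj_iff]
    omega
  simpa [List.formPerm] using absLength_list_prod_le hswap

theorem finRotate_eq_formPerm_finRange (n : ℕ) : finRotate n = (List.finRange n).formPerm := by
  ext x
  have := List.formPerm_apply_getElem _ (List.nodup_finRange n) x (by simp)
  simp only [List.getElem_finRange, Fin.cast_mk, Fin.eta, List.length_finRange] at this
  rw [this]
  simp [Fin.val_add]

theorem absLength_finRotate_le (n : ℕ) :
    absLength {σ : Perm (Fin n) | σ.IsSwap} (finRotate n) ≤ n - 1 := by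
  simpa [finRotate_eq_formPerm_finRange] using absLength_formPerm_le (List.nodup_finRange n)

section InvariantFunctions

open LinearMap Module

variable {K : Type*} [Field K] {α : Type*} [DecidableEq α]

theorem finrank_span_singleton_le {V : Type*} [AddCommGroup V] [Module K V] (v : V) :
    finrank K (K ∙ v) ≤ 1 :=
  (finrank_span_le_card ({v} : Set V)).trans (by simp)

theorem finrank_range_funLeft_swap_sub_id_le (a b : α) :
    finrank K (range (funLeft K K (swap a b) - LinearMap.id)) ≤ 1 := by
  have hrange : range (funLeft K K (swap a b) - LinearMap.id) ≤
      K ∙ (Pi.single a 1 - Pi.single b 1 : α → K) := by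
    rintro _ ⟨v, rfl⟩
    refine Submodule.mem_span_singleton.2 ⟨v b - v a, funext fun x => ?_⟩
    rcases eq_or_ne x a with rfl | hxa
    · rcases eq_or_ne x b with rfl | hxb
      · simp
      · simp [hxb]
    rcases eq_or_ne x b with rfl | hxb
    · simp [hxa]
    · simp [swap_apply_of_ne_of_ne hxa hxb, hxa, hxb]
  exact (Submodule.finrank_mono hrange).trans (finrank_span_singleton_le _)

theorem finrank_range_funLeft_prod_sub_id_le [Fintype α] {L : List (Perm α)}
    (hL : ∀ t ∈ L, t.IsSwap) :
    finrank K (range (funLeft K K L.prod - LinearMap.id)) ≤ L.length := by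
  induction L with
  | nil =>
    rw [List.prod_nil, sub_eq_zero.2 (LinearMap.ext (funLeft_id (R := K) (M := K)))]
    simp
  | cons t L ih =>
    obtain ⟨a, b, -, rfl⟩ := hL t List.mem_cons_self
    have hdecomp : funLeft K K ⇑(swap a b * L.prod) - LinearMap.id =
        (funLeft K K L.prod).comp (funLeft K K (swap a b) - LinearMap.id) +
          (funLeft K K L.prod - LinearMap.id) := by
      ext v x
      simp
    calc finrank K (range (funLeft K K ⇑(swap a b * L.prod) - LinearMap.id))
        ≤ finrank K (range (funLeft K K (swap a b) - LinearMap.id)) +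
            finrank K (range (funLeft K K L.prod - LinearMap.id)) := by
          rw [hdecomp]
          refine (Submodule.finrank_mono (range_add_le _ _)).trans <|
            (Submodule.finrank_add_le_finrank_add_finrank _ _).trans (Nat.add_le_add_right ?_ _)
          rw [range_comp]
          exact Submodule.finrank_map_le _ _
      _ ≤ (swap a b :: L).length := by
          grw [finrank_range_funLeft_swap_sub_id_le, ih fun t ht => hL t (List.mem_cons_of_mem _ ht)]
          simp [add_comm]

theorem exists_invariant_ne_of_forall_isSwap [Fintype α] {L : List (Perm α)}
    (hL : ∀ t ∈ L, t.IsSwap) (hlen : L.length + 2 ≤ Fintype.card α) :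
    ∃ v : α → K, v ∘ L.prod = v ∧ ∃ x y, v x ≠ v y := by
  set f := funLeft K K L.prod - LinearMap.id
  have hker : 2 ≤ finrank K (ker f) := by
    have := f.finrank_range_add_finrank_ker
    rw [finrank_fintype_fun_eq_card] at this
    have : finrank K (range f) ≤ L.length := finrank_range_funLeft_prod_sub_id_le hL
    omega
  by_contra! hconst
  obtain ⟨x₀⟩ : Nonempty α := Fintype.card_pos_iff.1 (by omega)
  have hle : ker f ≤ K ∙ (fun _ => 1 : α → K) := fun v hv => by
    have hinv : v ∘ L.prod = v := sub_eq_zero.1 hv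
    exact Submodule.mem_span_singleton.2 ⟨v x₀, funext fun x => by simp [hconst v hinv x₀ x]⟩
  have := (Submodule.finrank_mono hle).trans (finrank_span_singleton_le _)
  omega

end InvariantFunctions

theorem exists_invariant_ne_of_absLe_finRotate {K : Type*} [Field K] {n : ℕ} {u : Perm (Fin n)}
    (hu : u ≠ 1) (hle : absLe {σ : Perm (Fin n) | σ.IsSwap} u (finRotate n)) :
    ∃ v : Fin n → K, v ∘ (u⁻¹ * finRotate n) = v ∧ ∃ x y, v x ≠ v y := by
  have hclosure (w : Perm (Fin n)) : w ∈ Submonoid.closure {σ : Perm (Fin n) | σ.IsSwap} := by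
    simp [Perm.mclosure_isSwap]
  obtain ⟨L, hlen, hL, hprod⟩ := exists_length_eq_absLength (hclosure (u⁻¹ * finRotate n))
  have hu_pos := absLength_pos (hclosure u) hu
  have hc := absLength_finRotate_le n
  unfold absLe at hle
  rw [← hprod]
  exact exists_invariant_ne_of_forall_isSwap hL (by simp only [Fintype.card_fin]; omega)

section Crossing

open Fin.NatCast

variable {β : Type*} {n : ℕ}

section Normalized

variable [NeZero n] {j k l : Fin n} {v : Fin n → β}

theorem apply_swap_swap_eq_apply_pred (hv : ∀ x, v (swap k l (swap 0 j (x + 1))) = v x)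
    (y : Fin n) (hy : 0 < (y : ℕ)) : v (swap k l (swap 0 j y)) = v ((y - 1 : ℕ) : Fin n) := by
  have := hv ((y - 1 : ℕ) : Fin n)
  rwa [← Nat.cast_succ, Nat.succ_eq_add_one, Nat.sub_add_cancel hy, Fin.cast_val_eq_self] at this

theorem apply_natCast_eq_of_forall_ne (hv : ∀ x, v (swap k l (swap 0 j (x + 1))) = v x)
    {a b : ℕ} (hab : a ≤ b) (hb : b < n)
    (hfree : ∀ c, a < c → c ≤ b → c ≠ k ∧ c ≠ j ∧ c ≠ l) : v (a : Fin n) = v b := by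
  induction b, hab using Nat.le_induction with
  | base => rfl
  | succ b hab ih =>
    obtain ⟨hk, hj, hl⟩ := hfree (b + 1) (by omega) le_rfl
    have hval : (((b + 1 : ℕ) : Fin n) : ℕ) = b + 1 := Fin.val_cast_of_lt hb
    have hstep := apply_swap_swap_eq_apply_pred hv ((b + 1 : ℕ) : Fin n) (by omega)
    rw [swap_apply_of_ne_of_ne (a := 0) (Fin.ne_of_val_ne (by rw [hval, Fin.val_zero]; omega))
        (Fin.ne_of_val_ne (by omega)),
      swap_apply_of_ne_of_ne (Fin.ne_of_val_ne (by omega)) (Fin.ne_of_val_ne (by omega)), hval,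
      Nat.add_sub_cancel] at hstep
    rw [ih (by omega) fun c h1 h2 => hfree c h1 (by omega), hstep]

theorem apply_swap_points_eq_apply_zero (hkj : (k : ℕ) < j) (hjl : (j : ℕ) ≤ l)
    (hne : k = 0 → j ≠ l) (hv : ∀ x, v (swap k l (swap 0 j (x + 1))) = v x) :
    v k = v 0 ∧ v j = v 0 ∧ v l = v 0 := by
  -- `v` is constant on each of the arcs `[0, k)`, `[k, j)`, `[j, l)`, `[l, n)`, and `hv` at the
  -- last points of the arcs identifies their values.
  have hpred := apply_swap_swap_eq_apply_pred hv
  have hl0 : l ≠ 0 := Fin.ne_of_val_ne (by rw [Fin.val_zero]; omega)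
  have arcB : v k = v ((j - 1 : ℕ) : Fin n) := by
    simpa using apply_natCast_eq_of_forall_ne hv (a := k) (b := j - 1) (by omega) (by omega)
      (by omega)
  have arcC (hjl' : (j : ℕ) < l) : v j = v ((l - 1 : ℕ) : Fin n) := by
    simpa using apply_natCast_eq_of_forall_ne hv (a := j) (b := l - 1) (by omega) (by omega)
      (by omega)
  have relJ := hpred j (by omega)
  rw [swap_apply_right] at relJ
  have relL (hjl' : (j : ℕ) < l) : v k = v ((l - 1 : ℕ) : Fin n) := by
    rw [← hpred l (by omega), swap_apply_of_ne_of_ne hl0 (Fin.ne_of_val_ne (by omega)),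
      swap_apply_right]
  rcases eq_or_ne k 0 with rfl | hk0
  · have hjl' : (j : ℕ) < l := lt_of_le_of_ne hjl fun h => hne rfl (Fin.ext h)
    rw [swap_apply_left] at relJ
    exact ⟨rfl, by rw [arcC hjl', ← relL hjl'], by rw [relJ, ← arcB]⟩
  · have hk : 0 < (k : ℕ) := Fin.pos_iff_ne_zero.2 hk0
    rw [swap_apply_of_ne_of_ne hk0.symm hl0.symm] at relJ
    have arcA : v 0 = v ((k - 1 : ℕ) : Fin n) := by
      simpa using apply_natCast_eq_of_forall_ne hv (a := 0) (b := k - 1) (by omega) (by omega)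
        (by omega)
    have relK := hpred k hk
    rw [swap_apply_of_ne_of_ne hk0 (Fin.ne_of_val_ne (by omega)), swap_apply_left] at relK
    have hK : v k = v 0 := arcB.trans relJ.symm
    refine ⟨hK, ?_, relK.trans arcA.symm⟩
    rcases hjl.eq_or_lt with hjl' | hjl'
    · rw [Fin.ext hjl', relK, arcA]
    · exact (arcC hjl').trans ((relL hjl').symm.trans hK)

theorem apply_eq_apply_zero_of_crossing (hkj : k < j) (hjl : j ≤ l) (hne : k = 0 → j ≠ l)
    (hv : ∀ x, v (swap k l (swap 0 j (x + 1))) = v x) (x : Fin n) : v x = v 0 := by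
  rw [Fin.lt_def] at hkj
  rw [Fin.le_def] at hjl
  obtain ⟨hK, hJ, hL⟩ := apply_swap_points_eq_apply_zero hkj hjl hne hv
  have reach (p : Fin n) (hp : v p = v 0) (hpx : (p : ℕ) ≤ x)
      (hfree : ∀ c, (p : ℕ) < c → c ≤ x → c ≠ k ∧ c ≠ j ∧ c ≠ l) : v x = v 0 := by
    simpa [hp] using (apply_natCast_eq_of_forall_ne hv hpx x.isLt hfree).symm
  by_cases hxk : (x : ℕ) < k
  · exact reach 0 rfl (by simp) (by simp only [Fin.val_zero]; omega)
  by_cases hxj : (x : ℕ) < j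
  · exact reach k hK (by omega) (by omega)
  by_cases hxl : (x : ℕ) < l
  · exact reach j hJ (by omega) (by omega)
  · exact reach l hL (by omega) (by omega)

end Normalized

theorem apply_eq_apply_of_crossing {i j k l : Fin n} {v : Fin n → β}
    (hik : i ≤ k) (hkj : k < j) (hl : l < i ∨ j ≤ l) (hne : swap i j ≠ swap k l)
    (hv : v ∘ (swap k l * swap i j * finRotate n) = v) (x : Fin n) : v x = v i := by
  have := i.neZero
  -- Conjugating by the rotation `y ↦ y + i` moves `i` to `0`.
  have hshift (a b y : Fin n) : swap a b y + i = swap (a + i) (b + i) (y + i) :=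
    (add_left_injective i).map_swap a b y
  have hj : ((j - i : Fin n) : ℕ) = j - i := Fin.sub_val_of_le (hik.trans hkj.le)
  have hlj : (j - i : Fin n) ≤ l - i := by
    rw [Fin.le_def, hj]
    rcases hl with hli | hjl
    · rw [Fin.coe_sub_iff_lt.2 hli]
      omega
    · rw [Fin.sub_val_of_le (hik.trans (hkj.le.trans hjl))]
      omega
  have key := apply_eq_apply_zero_of_crossing (v := fun y => v (y + i)) (j := j - i)
    (k := k - i) (l := l - i) ?_ hlj ?_ ?_ (x - i)
  · simpa using key
  · rw [Fin.lt_def, hj, Fin.sub_val_of_le hik]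
    omega
  · intro hk hjl
    rw [sub_eq_zero] at hk
    rw [sub_left_inj] at hjl
    exact hne (by rw [hk, hjl])
  · intro y
    have := congrFun hv (y + i)
    simp only [Function.comp_apply, Perm.mul_apply, finRotate_apply] at this
    simpa [hshift, add_right_comm y 1 i] using this

end Crossing

theorem bA_sub_left (n : ℕ) (x x' y : Fin (n - 1) → ℚ) :
    bA n (x - x') y = bA n x y - bA n x' y := by
  simp only [bA, ← Finset.sum_sub_distrib]
  congr! 2 with p q
  split_ifs <;> simp [sub_mul]

theorem bA_sub_right (n : ℕ) (x y y' : Fin (n - 1) → ℚ) :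
    bA n x (y - y') = bA n x y - bA n x y' := by
  simp only [bA, ← Finset.sum_sub_distrib]
  congr! 2 with p q
  split_ifs <;> simp [mul_sub]

theorem vecQ_eq_single {n : ℕ} (a : Fin n) (ha : (a : ℕ) < n - 1) :
    vecQ n a = Pi.single ⟨a, ha⟩ 1 := by
  ext q
  simp [vecQ, Pi.single_apply, Fin.ext_iff]

theorem vecQ_eq_zero_of_le {n : ℕ} (a : Fin n) (ha : n - 1 ≤ (a : ℕ)) : vecQ n a = 0 := by
  ext q
  simp only [vecQ, Pi.zero_apply, ite_eq_right_iff, one_ne_zero]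
  omega

theorem bA_single_single {n : ℕ} (p q : Fin (n - 1)) :
    bA n (Pi.single p 1) (Pi.single q 1) = if p ≤ q then 1 else 0 := by
  rw [bA, Finset.sum_eq_single p, Finset.sum_eq_single q] <;> intros <;> simp_all

theorem bA_vecQ_vecQ {n : ℕ} (a b : Fin n) :
    bA n (vecQ n a) (vecQ n b) = if (a : ℕ) ≤ b ∧ (b : ℕ) < n - 1 then 1 else 0 := by
  by_cases hb : (b : ℕ) < n - 1
  · by_cases ha : (a : ℕ) < n - 1
    · rw [vecQ_eq_single a ha, vecQ_eq_single b hb, bA_single_single]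
      simp only [Fin.mk_le_mk, hb, and_true]
    · rw [vecQ_eq_zero_of_le a (by omega), if_neg (by omega)]
      simp [bA]
  · rw [vecQ_eq_zero_of_le b (by omega), if_neg (by omega)]
    simp [bA]

theorem bA_vanishes_on_subordinate_roots_general (n : ℕ) (i j k l : Fin n)
    (hij : i < j) (hkl : k < l) (hne : Equiv.swap i j ≠ Equiv.swap k l)
    (hle : absLe {t : Equiv.Perm (Fin n) | t.IsSwap}
      (Equiv.swap i j * Equiv.swap k l) (finRotate n)) :
    bA n (vecQ n i - vecQ n j) (vecQ n k - vecQ n l) = 0 := by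
  by_cases hnoncross : (i ≤ k ∧ k < j) ↔ (i ≤ l ∧ l < j)
  · simp only [bA_sub_left, bA_sub_right, bA_vecQ_vecQ]
    rw [iff_iff_and_or_not_and_not] at hnoncross
    simp only [Fin.le_def, Fin.lt_def] at hij hkl hnoncross
    split_ifs <;> first | omega | norm_num
  · exfalso
    have hu : swap i j * swap k l ≠ 1 := by
      rwa [Ne, mul_eq_one_iff_eq_inv, swap_inv]
    obtain ⟨v, hv, x, y, hxy⟩ := exists_invariant_ne_of_absLe_finRotate (K := ℚ) hu hle
    rw [mul_inv_rev, swap_inv, swap_inv] at hv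
    have hconst : ∀ z, v z = v i := by
      by_cases hk : i ≤ k ∧ k < j
      · exact apply_eq_apply_of_crossing hk.1 hk.2 (by grind) hne hv
      · rw [swap_comm k l] at hne hv
        exact apply_eq_apply_of_crossing (k := l) (l := k) (by grind) (by grind) (by grind) hne hv
    exact hxy ((hconst x).trans (hconst y).symm)

/-- If `s = (i j)` and `t = (k l)` are distinct transpositions of `Sₙ` with
`s * t ≤ (1 2 … n)` in the absolute order, then `b_A(α_s, α_t) = 0`, where
`α_{(i j)} = e_i - e_j` with the convention `e_n = 0`. -/
theorem bA_vanishes_on_subordinate_roots (n : ℕ) (hn : 2 ≤ n) (i j k l : Fin n)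
    (hij : i < j) (hkl : k < l) (hne : Equiv.swap i j ≠ Equiv.swap k l)
    (hle : absLe {t : Equiv.Perm (Fin n) | t.IsSwap}
      (Equiv.swap i j * Equiv.swap k l) (finRotate n)) :
    bA n (vecQ n i - vecQ n j) (vecQ n k - vecQ n l) = 0 :=
  bA_vanishes_on_subordinate_roots_general n i j k l hij hkl hne hle
end

section
/- Let n ≥ 2. Define a bilinear form b_B on ℚ^n by b_B(e_i, e_j) = 1 if i ≤ j and b_B(e_i, e_j) = −1 if i > j, for 1 ≤ i, j ≤ n. For reflections of W(B_n), define roots in ℚ^n by α_{⦅i j⦆} := e_i − e_j for 1 ≤ i < j ≤ n, α_{⦅i (−j)⦆} := e_i + e_j for 1 ≤ i < j ≤ n, and α_{[i]} := e_i for 1 ≤ i ≤ n. Then for all distinct reflections s, t ∈ T(B_n) such that st ≤ c in the absolute order, b_B(α_s, α_t) = 0. -/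
/-- The set of reflections `T(Bₙ)` of the signed symmetric group. -/
def reflB (n : ℕ) : Set (Equiv.Perm ℤ) :=
  {t | (∃ i j : ℤ, 1 ≤ i ∧ i < |j| ∧ |j| ≤ (n : ℤ) ∧
          t = Equiv.swap i j * Equiv.swap (-i) (-j)) ∨
        ∃ i : ℤ, 1 ≤ i ∧ i ≤ (n : ℤ) ∧ t = Equiv.swap i (-i)}

/-- The standard basis vector `e_i ∈ ℚⁿ`, for `1 ≤ i ≤ n` (`1`-indexed). -/
def evQ (n : ℕ) (i : ℤ) : Fin n → ℚ :=
  fun k => if ((k : ℕ) : ℤ) + 1 = i then 1 else 0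

/-- `t` is a reflection of `W(Bₙ)` with associated root `a`:
`α_⦅i j⦆ = e_i - e_j`, `α_⦅i (-j)⦆ = e_i + e_j` (for `1 ≤ i < j ≤ n`), and
`α_[i] = e_i` (for `1 ≤ i ≤ n`). -/
def IsReflRootB (n : ℕ) (t : Equiv.Perm ℤ) (a : Fin n → ℚ) : Prop :=
  (∃ i j : ℤ, 1 ≤ i ∧ i < j ∧ j ≤ (n : ℤ) ∧
      t = Equiv.swap i j * Equiv.swap (-i) (-j) ∧ a = evQ n i - evQ n j) ∨
    (∃ i j : ℤ, 1 ≤ i ∧ i < j ∧ j ≤ (n : ℤ) ∧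
      t = Equiv.swap i (-j) * Equiv.swap (-i) j ∧ a = evQ n i + evQ n j) ∨
    ∃ i : ℤ, 1 ≤ i ∧ i ≤ (n : ℤ) ∧ t = Equiv.swap i (-i) ∧ a = evQ n i

/-- The bilinear form `b_B` on `ℚⁿ` with `b_B(e_i, e_j) = 1` if `i ≤ j` and
`b_B(e_i, e_j) = -1` if `i > j`. -/
def bB (n : ℕ) (x y : Fin n → ℚ) : ℚ :=
  ∑ i : Fin n, ∑ j : Fin n, if i ≤ j then x i * y j else -(x i * y j)


open Module

lemma absLength_le_length {G : Type*} [Group G] {T : Set G} (l : List G) (hl : ∀ t ∈ l, t ∈ T) :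
    absLength T l.prod ≤ l.length :=
  Nat.sInf_le ⟨l, rfl, hl, rfl⟩

lemma exists_list_length_eq_absLength {G : Type*} [Group G] {T : Set G} (l : List G)
    (hl : ∀ t ∈ l, t ∈ T) :
    ∃ l' : List G, l'.length = absLength T l.prod ∧ (∀ t ∈ l', t ∈ T) ∧ l'.prod = l.prod :=
  Nat.sInf_mem (s := {k | ∃ l' : List G, l'.length = k ∧ (∀ t ∈ l', t ∈ T) ∧ l'.prod = l.prod})
    ⟨l.length, l, rfl, hl, rfl⟩

lemma finrank_span_pair_le {K V : Type*} [DivisionRing K] [AddCommGroup V] [Module K V]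
    (x y : V) : finrank K (Submodule.span K {x, y}) ≤ 2 := by
  classical
  have h := (finrank_span_finset_le_card (R := K) {x, y}).trans Finset.card_le_two
  rwa [Finset.coe_pair, Set.finrank] at h

section DotProduct

variable {ι K : Type*} [Fintype ι] [Field K]

lemma exists_smul_eq_of_dotProduct_eq_zero [DecidableEq ι] {d a : ι → K}
    (h : ∀ x, d ⬝ᵥ x = 0 → a ⬝ᵥ x = 0) : ∃ κ : K, κ • d = a := by
  have hmem : dotProductBilin K K a ∈
      Submodule.span K (Set.range fun _ : Unit => dotProductBilin K K d) :=
    mem_span_of_iInf_ker_le_ker fun x hx => by simpa using h x (by simpa using hx)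
  rw [Set.range_const, Submodule.mem_span_singleton] at hmem
  obtain ⟨κ, hκ⟩ := hmem
  exact ⟨κ, funext fun k => by simpa using LinearMap.congr_fun hκ (Pi.single k 1)⟩

lemma finrank_ker_dotProductBilin (d : ι → K) :
    Fintype.card ι - 1 ≤ finrank K (LinearMap.ker (dotProductBilin K K d)) := by
  have h := LinearMap.finrank_range_add_finrank_ker (dotProductBilin K K d)
  have hr := Submodule.finrank_le (LinearMap.range (dotProductBilin K K d))
  rw [finrank_self] at hr
  rw [Module.finrank_fintype_fun_eq_card] at h
  omega

def dotReflection (a y : ι → K) : ι → K := y - (2 * (a ⬝ᵥ y) / (a ⬝ᵥ a)) • a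

lemma dotProduct_dotReflection (x a y : ι → K) :
    x ⬝ᵥ dotReflection a y = dotReflection a x ⬝ᵥ y := by
  simp only [dotReflection, dotProduct_sub, sub_dotProduct, dotProduct_smul, smul_dotProduct,
    smul_eq_mul, dotProduct_comm x a, dotProduct_comm a y, dotProduct_comm x y]
  ring

lemma dotReflection_of_dotProduct_eq_zero {a y : ι → K} (h : a ⬝ᵥ y = 0) :
    dotReflection a y = y := by
  simp [dotReflection, h]

lemma dotReflection_involutive {a : ι → K} (ha : a ⬝ᵥ a ≠ 0) :
    Function.Involutive (dotReflection a) := by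
  intro y
  ext k
  simp only [dotReflection, dotProduct_sub, dotProduct_smul, smul_eq_mul, Pi.sub_apply,
    Pi.smul_apply]
  field_simp
  ring

lemma dotReflection_smul {a : ι → K} {κ : K} (hκ : κ ≠ 0) :
    dotReflection (κ • a) = dotReflection a := by
  ext y k
  simp only [dotReflection, dotProduct_smul, smul_dotProduct, smul_eq_mul, Pi.sub_apply,
    Pi.smul_apply]
  field_simp

lemma dotReflection_dotReflection (a b x : ι → K) :
    dotReflection a (dotReflection b x) =
      x - ((2 * (a ⬝ᵥ dotReflection b x) / (a ⬝ᵥ a)) • a + (2 * (b ⬝ᵥ x) / (b ⬝ᵥ b)) • b) := by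
  rw [dotReflection, dotReflection]
  abel

end DotProduct

lemma swap_mul_swap_neg_apply {i j : ℤ} (hi : i ≠ 0) (hj : j ≠ 0) (hij : i ≠ j) (hij' : i ≠ -j)
    (m : ℤ) :
    (Equiv.swap i j * Equiv.swap (-i) (-j)) m =
      if m = i then j else if m = j then i
      else if m = -i then -j else if m = -j then -i else m := by
  simp only [Equiv.Perm.mul_apply, Equiv.swap_apply_def]
  split_ifs <;> omega

section evQ

variable {n : ℕ}

lemma evQ_eq_zero {i : ℤ} (h : ¬(1 ≤ i ∧ i ≤ n)) : evQ n i = 0 := by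
  ext k
  simp only [evQ, Pi.zero_apply, ite_eq_right_iff, one_ne_zero]
  omega

lemma dotProduct_evQ_coe (x : Fin n → ℚ) (k : Fin n) : x ⬝ᵥ evQ n ((k : ℕ) + 1) = x k := by
  rw [dotProduct, Finset.sum_eq_single k]
  · simp only [evQ, if_pos, mul_one]
  · intro l _ hl
    rw [evQ, if_neg (by omega), mul_zero]
  · simp

lemma evQ_dotProduct_evQ (i j : ℤ) :
    evQ n i ⬝ᵥ evQ n j = if i = j ∧ 1 ≤ i ∧ i ≤ n then 1 else 0 := by
  by_cases hj : 1 ≤ j ∧ j ≤ n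
  · obtain ⟨k, rfl⟩ : ∃ k : Fin n, j = (k : ℕ) + 1 :=
      ⟨⟨(j - 1).toNat, by omega⟩, by rw [Fin.val_mk]; omega⟩
    have := k.isLt
    rw [dotProduct_evQ_coe, evQ]
    exact if_congr (by omega) rfl rfl
  · rw [evQ_eq_zero hj, dotProduct_zero, if_neg (by omega)]

end evQ

lemma exists_isReflRootB_of_mem_reflB {n : ℕ} {t : Equiv.Perm ℤ} (ht : t ∈ reflB n) :
    ∃ a : Fin n → ℚ, IsReflRootB n t a := by
  rcases ht with ⟨i, j, hi, hij, hj, rfl⟩ | ⟨i, hi, hi', rfl⟩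
  · rcases lt_or_gt_of_ne (show j ≠ 0 by rintro rfl; rw [abs_zero] at hij; omega) with hj0 | hj0
    · rw [abs_of_neg hj0] at hij hj
      exact ⟨_, Or.inr (Or.inl ⟨i, -j, hi, hij, hj, by rw [neg_neg], rfl⟩)⟩
    · rw [abs_of_pos hj0] at hij hj
      exact ⟨_, Or.inl ⟨i, j, hi, hij, hj, rfl, rfl⟩⟩
  · exact ⟨_, Or.inr (Or.inr ⟨i, hi, hi', rfl, rfl⟩)⟩

namespace TypeB

variable {n : ℕ}

/-- `e_p`, with the convention `e_{-p} = -e_p`; it vanishes unless `1 ≤ |p| ≤ n`. -/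
def signedBasis (n : ℕ) (p : ℤ) : Fin n → ℚ := evQ n p - evQ n (-p)

lemma signedBasis_neg (p : ℤ) : signedBasis n (-p) = -signedBasis n p := by
  simp [signedBasis]

lemma dotProduct_signedBasis_coe (x : Fin n → ℚ) (k : Fin n) :
    x ⬝ᵥ signedBasis n ((k : ℕ) + 1) = x k := by
  rw [signedBasis, evQ_eq_zero (i := -((k : ℕ) + 1)) (by omega), sub_zero, dotProduct_evQ_coe]

lemma ext_of_dotProduct_signedBasis {x y : Fin n → ℚ}
    (h : ∀ k : Fin n, x ⬝ᵥ signedBasis n ((k : ℕ) + 1) = y ⬝ᵥ signedBasis n ((k : ℕ) + 1)) :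
    x = y :=
  funext fun k => by simpa only [dotProduct_signedBasis_coe] using h k

lemma signedBasis_ne_zero_iff {p : ℤ} :
    signedBasis n p ≠ 0 ↔ (1 ≤ p ∧ p ≤ n) ∨ (1 ≤ -p ∧ -p ≤ n) := by
  constructor
  · intro hp
    by_contra! h
    exact hp (by rw [signedBasis, evQ_eq_zero (by omega), evQ_eq_zero (by omega), sub_zero])
  · intro hp h0
    have := congrArg (signedBasis n p ⬝ᵥ ·) h0
    simp only [signedBasis, sub_dotProduct, dotProduct_sub, evQ_dotProduct_evQ,
      dotProduct_zero, true_and] at this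
    split_ifs at this <;> first | omega | norm_num at this

lemma eq_of_signedBasis_eq {p q : ℤ} (h : signedBasis n p = signedBasis n q)
    (hp : signedBasis n p ≠ 0) : p = q := by
  rw [signedBasis_ne_zero_iff] at hp
  have := congrArg (signedBasis n p ⬝ᵥ ·) h
  simp only [signedBasis, sub_dotProduct, dotProduct_sub, evQ_dotProduct_evQ, true_and] at this
  split_ifs at this <;> first | omega | norm_num at this

end TypeB

namespace IsReflRootB

open TypeB

variable {n : ℕ} {s t : Equiv.Perm ℤ} {a b : Fin n → ℚ}

lemma signedBasis_apply (hs : IsReflRootB n s a) (m : ℤ) :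
    signedBasis n (s m) = dotReflection a (signedBasis n m) := by
  rcases hs with ⟨i, j, hi, hij, hj, rfl, rfl⟩ | ⟨i, j, hi, hij, hj, rfl, rfl⟩ |
      ⟨i, hi, hi', rfl, rfl⟩ <;>
    simp only [Equiv.Perm.mul_apply, Equiv.swap_apply_def] <;>
    split_ifs <;> first
      | omega
      | subst_vars
        simp (disch := omega) only [dotReflection, signedBasis, add_dotProduct, dotProduct_add,
          sub_dotProduct, dotProduct_sub, evQ_dotProduct_evQ, if_pos, if_neg, true_and,
          evQ_eq_zero, neg_neg, dotProduct_zero]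
        module

lemma dotProduct_signedBasis_apply (hs : IsReflRootB n s a) (x : Fin n → ℚ) (m : ℤ) :
    x ⬝ᵥ signedBasis n (s m) = dotReflection a x ⬝ᵥ signedBasis n m := by
  rw [signedBasis_apply hs, dotProduct_dotReflection]

lemma dotProduct_self_ne_zero (hs : IsReflRootB n s a) : a ⬝ᵥ a ≠ 0 := by
  rcases hs with ⟨i, j, hi, hij, hj, -, rfl⟩ | ⟨i, j, hi, hij, hj, -, rfl⟩ |
      ⟨i, hi, hi', -, rfl⟩ <;>
    simp (disch := omega) only [add_dotProduct, dotProduct_add, sub_dotProduct, dotProduct_sub,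
      evQ_dotProduct_evQ, if_pos, if_neg, true_and] <;>
    norm_num

lemma ne_zero (hs : IsReflRootB n s a) : a ≠ 0 := by
  rintro rfl
  exact dotProduct_self_ne_zero hs (zero_dotProduct 0)

lemma mem_reflB (hs : IsReflRootB n s a) : s ∈ reflB n := by
  rcases hs with ⟨i, j, hi, hij, hj, rfl, -⟩ | ⟨i, j, hi, hij, hj, rfl, -⟩ | ⟨i, hi, hi', rfl, -⟩
  · exact Or.inl ⟨i, j, hi, by rw [abs_of_pos (by omega)]; omega,
      by rw [abs_of_pos (by omega)]; omega, rfl⟩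
  · exact Or.inl ⟨i, -j, hi, by rw [abs_neg, abs_of_pos (by omega)]; omega,
      by rw [abs_neg, abs_of_pos (by omega)]; omega, by rw [neg_neg]⟩
  · exact Or.inr ⟨i, hi, hi', rfl⟩

lemma apply_eq_self (hs : IsReflRootB n s a) {m : ℤ} (hm : signedBasis n m = 0) : s m = m := by
  rw [← not_ne_iff, signedBasis_ne_zero_iff] at hm
  rcases hs with ⟨i, j, hi, hij, hj, rfl, -⟩ | ⟨i, j, hi, hij, hj, rfl, -⟩ |
      ⟨i, hi, hi', rfl, -⟩ <;>
    simp only [Equiv.Perm.mul_apply, Equiv.swap_apply_def] <;>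
    split_ifs <;> omega

lemma signedBasis_apply_ne_zero (hs : IsReflRootB n s a) {m : ℤ} (hm : signedBasis n m ≠ 0) :
    signedBasis n (s m) ≠ 0 := by
  have hinv := dotReflection_involutive (dotProduct_self_ne_zero hs)
  rwa [signedBasis_apply hs, ← hinv.injective.ne_iff, hinv,
    dotReflection_of_dotProduct_eq_zero (dotProduct_zero a)]

lemma mul_self (hs : IsReflRootB n s a) : s * s = 1 := by
  ext m
  by_cases hm : signedBasis n m = 0
  · simp [apply_eq_self hs hm]
  · refine eq_of_signedBasis_eq ?_
      (signedBasis_apply_ne_zero hs (signedBasis_apply_ne_zero hs hm))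
    rw [Equiv.Perm.mul_apply, signedBasis_apply hs, signedBasis_apply hs,
      dotReflection_involutive (dotProduct_self_ne_zero hs), Equiv.Perm.one_apply]

lemma eq_of_smul_eq (hs : IsReflRootB n s a) (ht : IsReflRootB n t b) {κ : ℚ} (h : κ • a = b) :
    s = t := by
  have hκ : κ ≠ 0 := by
    rintro rfl
    exact ne_zero ht (by rw [← h, zero_smul])
  ext m
  by_cases hm : signedBasis n m = 0
  · rw [apply_eq_self hs hm, apply_eq_self ht hm]
  · refine eq_of_signedBasis_eq ?_ (signedBasis_apply_ne_zero hs hm)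
    rw [signedBasis_apply hs, signedBasis_apply ht, ← h, dotReflection_smul hκ]

lemma linearIndependent (hs : IsReflRootB n s a) (ht : IsReflRootB n t b) (hst : s ≠ t) :
    LinearIndependent ℚ ![a, b] :=
  (LinearIndependent.pair_iff' (ne_zero hs)).2 fun _ h => hst (eq_of_smul_eq hs ht h)

lemma dotProduct_signedBasis_mul_apply (hs : IsReflRootB n s a) (ht : IsReflRootB n t b)
    (x : Fin n → ℚ) (m : ℤ) :
    x ⬝ᵥ signedBasis n ((s * t) m) = dotReflection b (dotReflection a x) ⬝ᵥ signedBasis n m := by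
  rw [Equiv.Perm.mul_apply, dotProduct_signedBasis_apply hs, dotProduct_signedBasis_apply ht]

end IsReflRootB

namespace TypeB

open IsReflRootB

variable {n : ℕ} {c s t : Equiv.Perm ℤ} {a b : Fin n → ℚ}

/-- `w` fixes `x` for the action `w • e_m = e_{w m}` of signed permutations on `ℚⁿ`. -/
def IsFixedBy (n : ℕ) (w : Equiv.Perm ℤ) (x : Fin n → ℚ) : Prop :=
  ∀ m : ℤ, x ⬝ᵥ signedBasis n (w m) = x ⬝ᵥ signedBasis n m

lemma exists_isFixedBy_subspace (l : List (Equiv.Perm ℤ)) (hl : ∀ r ∈ l, r ∈ reflB n) :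
    ∃ S : Submodule ℚ (Fin n → ℚ),
      n - l.length ≤ finrank ℚ S ∧ ∀ x ∈ S, IsFixedBy n l.prod x := by
  induction l with
  | nil => exact ⟨⊤, by simp, fun x _ m => rfl⟩
  | cons r l ih =>
    obtain ⟨S, hS, hfix⟩ := ih fun r' hr' => hl r' (List.mem_cons_of_mem r hr')
    obtain ⟨d, hd⟩ := exists_isReflRootB_of_mem_reflB (hl r List.mem_cons_self)
    let H := LinearMap.ker (dotProductBilin ℚ ℚ d)
    refine ⟨S ⊓ H, ?_, ?_⟩
    · have hsum := Submodule.finrank_sup_add_finrank_inf_eq S H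
      have hsup := Submodule.finrank_le (S ⊔ H)
      have hH : n - 1 ≤ finrank ℚ H := by
        simpa only [Fintype.card_fin] using finrank_ker_dotProductBilin d
      rw [Module.finrank_fin_fun] at hsup
      rw [List.length_cons]
      omega
    · rintro x ⟨hxS, hxd⟩ m
      rw [List.prod_cons, Equiv.Perm.mul_apply, dotProduct_signedBasis_apply hd,
        dotReflection_of_dotProduct_eq_zero (by simpa [H] using hxd), hfix x hxS m]

lemma dotProduct_eq_zero_of_isFixedBy_mul {x : Fin n → ℚ}
    (hs : IsReflRootB n s a) (ht : IsReflRootB n t b) (hst : s ≠ t) (hx : IsFixedBy n (s * t) x) :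
    a ⬝ᵥ x = 0 ∧ b ⬝ᵥ x = 0 := by
  have hfix : dotReflection b (dotReflection a x) = x := ext_of_dotProduct_signedBasis fun k => by
    rw [← dotProduct_signedBasis_mul_apply hs ht, hx]
  rw [dotReflection_dotReflection, sub_eq_self] at hfix
  obtain ⟨hb, ha⟩ := LinearIndependent.pair_iff.1 (linearIndependent ht hs hst.symm) _ _ hfix
  have hax : a ⬝ᵥ x = 0 := by simpa [dotProduct_self_ne_zero hs] using ha
  rw [dotReflection_of_dotProduct_eq_zero hax] at hb
  exact ⟨hax, by simpa [dotProduct_self_ne_zero ht] using hb⟩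

lemma two_le_absLength_mul (hs : IsReflRootB n s a) (ht : IsReflRootB n t b) (hst : s ≠ t) :
    2 ≤ absLength (reflB n) (s * t) := by
  obtain ⟨l, hlen, hl, hprod⟩ := exists_list_length_eq_absLength (T := reflB n) [s, t]
    (by simp [mem_reflB hs, mem_reflB ht])
  rw [List.prod_cons, List.prod_singleton] at hprod hlen
  rw [← hlen]
  match l, hl, hprod with
  | [], _, hprod =>
    exact absurd (dotProduct_eq_zero_of_isFixedBy_mul hs ht hst fun m => by
      rw [← hprod, List.prod_nil, Equiv.Perm.one_apply]).1 (dotProduct_self_ne_zero hs)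
  | [r], hl, hprod =>
    obtain ⟨d, hd⟩ := exists_isReflRootB_of_mem_reflB (hl r List.mem_cons_self)
    have horth : ∀ x, d ⬝ᵥ x = 0 → a ⬝ᵥ x = 0 ∧ b ⬝ᵥ x = 0 := fun x hx =>
      dotProduct_eq_zero_of_isFixedBy_mul hs ht hst fun m => by
        rw [← hprod, List.prod_singleton, dotProduct_signedBasis_apply hd,
          dotReflection_of_dotProduct_eq_zero hx]
    obtain ⟨κa, hκa⟩ := exists_smul_eq_of_dotProduct_eq_zero fun x hx => (horth x hx).1
    obtain ⟨κb, hκb⟩ := exists_smul_eq_of_dotProduct_eq_zero fun x hx => (horth x hx).2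
    have hκa0 : κa ≠ 0 := by
      rintro rfl
      exact ne_zero hs (by rw [← hκa, zero_smul])
    exact absurd (eq_of_smul_eq hs ht (κ := κb / κa) (by
      rw [← hκa, ← hκb, smul_smul, div_mul_cancel₀ _ hκa0])) hst
  | _ :: _ :: _, _, _ => simp

def coxeterFactors (n : ℕ) : ℕ → List (Equiv.Perm ℤ)
  | 0 => [Equiv.swap n (-n)]
  | k + 1 => (Equiv.swap ((n : ℤ) - k - 1) (n - k) * Equiv.swap (-((n : ℤ) - k - 1)) (-(n - k))) ::
      coxeterFactors n k

lemma length_coxeterFactors (k : ℕ) : (coxeterFactors n k).length = k + 1 := by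
  induction k with
  | zero => rfl
  | succ k ih => simp [coxeterFactors, ih]

lemma coxeterFactors_mem_reflB {k : ℕ} (hk : k < n) : ∀ r ∈ coxeterFactors n k, r ∈ reflB n := by
  induction k with
  | zero =>
    simp only [coxeterFactors, List.mem_singleton, forall_eq]
    exact Or.inr ⟨n, by omega, le_rfl, rfl⟩
  | succ k ih =>
    simp only [coxeterFactors, List.mem_cons, forall_eq_or_imp]
    refine ⟨Or.inl ⟨(n : ℤ) - k - 1, n - k, by omega, ?_, ?_, rfl⟩, ih (by omega)⟩ <;>
      rw [abs_of_pos (by omega)] <;> omega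

lemma prod_coxeterFactors_apply {k : ℕ} (hk : k < n) (j : ℤ) :
    (coxeterFactors n k).prod j =
      if n - k ≤ j ∧ j < n then j + 1 else if j = n then -(n - k)
      else if -n < j ∧ j ≤ -(n - k) then j - 1 else if j = -n then n - k else j := by
  induction k generalizing j with
  | zero =>
    simp only [coxeterFactors, List.prod_singleton, Equiv.swap_apply_def]
    split_ifs <;> omega
  | succ k ih =>
    rw [coxeterFactors, List.prod_cons, Equiv.Perm.mul_apply, ih (by omega),
      swap_mul_swap_neg_apply (by omega) (by omega) (by omega) (by omega)]
    push_cast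
    split_ifs <;> omega

lemma coxeter_apply (hc1 : ∀ i : ℤ, 1 ≤ i → i ≤ (n : ℤ) - 1 → c i = i + 1)
    (hc2 : c (n : ℤ) = -1) (hc3 : ∀ i : ℤ, c (-i) = -(c i))
    (hc4 : ∀ i : ℤ, (n : ℤ) < |i| → c i = i) (j : ℤ) :
    c j = if 1 ≤ j ∧ j < n then j + 1 else if j = n then -1
      else if -n < j ∧ j ≤ -1 then j - 1 else if j = -n then 1 else j := by
  split_ifs with h1 h2 h3 h4
  · exact hc1 j h1.1 (by omega)
  · rw [h2, hc2]
  · rw [← neg_neg j, hc3, hc1 (-j) (by omega) (by omega)]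
    ring
  · rw [h4, hc3, hc2, neg_neg]
  · rcases (show j = 0 ∨ (n : ℤ) < |j| by rw [lt_abs]; omega) with rfl | hj
    · have := hc3 0
      rw [neg_zero] at this
      omega
    · exact hc4 j hj

lemma exists_list_prod_eq_coxeter
    (hc1 : ∀ i : ℤ, 1 ≤ i → i ≤ (n : ℤ) - 1 → c i = i + 1)
    (hc2 : c (n : ℤ) = -1) (hc3 : ∀ i : ℤ, c (-i) = -(c i))
    (hc4 : ∀ i : ℤ, (n : ℤ) < |i| → c i = i) :
    ∃ l : List (Equiv.Perm ℤ), l.length = n ∧ (∀ r ∈ l, r ∈ reflB n) ∧ l.prod = c := by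
  have hn : 0 < n := by
    by_contra! h0
    obtain rfl : n = 0 := by omega
    have h0 : c 0 = -1 := by simpa using hc2
    have := hc3 0
    rw [neg_zero, h0] at this
    omega
  refine ⟨coxeterFactors n (n - 1), by rw [length_coxeterFactors]; omega,
    coxeterFactors_mem_reflB (by omega), Equiv.ext fun j => ?_⟩
  rw [prod_coxeterFactors_apply (by omega), coxeter_apply hc1 hc2 hc3 hc4]
  push_cast [Nat.cast_sub (show 1 ≤ n by omega)]
  split_ifs <;> omega

/-- `(y₁, …, yₙ) ↦ (y₂, …, yₙ, -y₁)`, the matrix of the Coxeter element in the signed basis. -/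
def negacyclicShift (n : ℕ) : (Fin n → ℚ) →ₗ[ℚ] Fin n → ℚ where
  toFun y k := if h : (k : ℕ) + 1 < n then y ⟨k + 1, h⟩ else -y ⟨0, k.pos⟩
  map_add' x y := by
    ext k
    simp only [Pi.add_apply]
    split_ifs <;> ring
  map_smul' r x := by
    ext k
    simp only [Pi.smul_apply, smul_eq_mul, RingHom.id_apply]
    split_ifs <;> ring

lemma negacyclicShift_apply_of_lt (y : Fin n → ℚ) {k : Fin n} (h : (k : ℕ) + 1 < n) :
    negacyclicShift n y k = y ⟨k + 1, h⟩ :=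
  dif_pos h

lemma negacyclicShift_apply_of_eq (y : Fin n → ℚ) {k : Fin n} (h : (k : ℕ) + 1 = n) :
    negacyclicShift n y k = -y ⟨0, k.pos⟩ :=
  dif_neg (by omega)

lemma dotProduct_signedBasis_coxeter
    (hc1 : ∀ i : ℤ, 1 ≤ i → i ≤ (n : ℤ) - 1 → c i = i + 1) (hc2 : c (n : ℤ) = -1)
    (x : Fin n → ℚ) (k : Fin n) :
    x ⬝ᵥ signedBasis n (c ((k : ℕ) + 1)) = negacyclicShift n x k := by
  by_cases h : (k : ℕ) + 1 < n
  · rw [hc1 _ (by omega) (by omega), negacyclicShift_apply_of_lt x h,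
      ← dotProduct_signedBasis_coe x ⟨k + 1, h⟩]
    push_cast
    rfl
  · rw [show ((k : ℕ) : ℤ) + 1 = n by omega, hc2, negacyclicShift_apply_of_eq x (by omega),
      signedBasis_neg, dotProduct_neg, ← dotProduct_signedBasis_coe x ⟨0, k.pos⟩]
    simp

lemma negacyclicShift_injective : Function.Injective (negacyclicShift n) := by
  rw [← LinearMap.ker_eq_bot, Submodule.eq_bot_iff]
  intro y hy
  ext ⟨j, hj⟩
  rcases j with _ | j
  · simpa [negacyclicShift_apply_of_eq y (k := ⟨n - 1, by omega⟩) (Nat.sub_add_cancel hj)] using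
      congrFun hy ⟨n - 1, by omega⟩
  · simpa [negacyclicShift_apply_of_lt y (k := ⟨j, by omega⟩) hj] using congrFun hy ⟨j, by omega⟩

lemma eq_zero_of_negacyclicShift_eq_self {y : Fin n → ℚ} (h : negacyclicShift n y = y) :
    y = 0 := by
  rcases Nat.eq_zero_or_pos n with rfl | hn
  · exact Subsingleton.elim _ _
  have hconst : ∀ j (hj : j < n), y ⟨j, hj⟩ = y ⟨0, hn⟩ := by
    intro j hj
    induction j with
    | zero => rfl
    | succ j ih =>
      rw [← ih (by omega), ← negacyclicShift_apply_of_lt y (k := ⟨j, by omega⟩) hj, h]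
  have hlast := congrFun h ⟨n - 1, by omega⟩
  rw [negacyclicShift_apply_of_eq y (Nat.sub_add_cancel hn), hconst (n - 1)] at hlast
  ext ⟨j, hj⟩
  rw [hconst, Pi.zero_apply]
  linarith

def bBDual (n : ℕ) (a : Fin n → ℚ) : Fin n → ℚ := fun j => ∑ i, if i ≤ j then a i else -a i

lemma bB_eq_bBDual_dotProduct (a y : Fin n → ℚ) : bB n a y = bBDual n a ⬝ᵥ y := by
  rw [bB, Finset.sum_comm]
  refine Finset.sum_congr rfl fun j _ => ?_
  rw [bBDual, Finset.sum_mul]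
  refine Finset.sum_congr rfl fun i _ => ?_
  split_ifs <;> ring

lemma negacyclicShift_bBDual (a : Fin n → ℚ) :
    negacyclicShift n (bBDual n a) = bBDual n a + (2 : ℚ) • negacyclicShift n a := by
  ext k
  simp only [Pi.add_apply, Pi.smul_apply, smul_eq_mul]
  by_cases h : (k : ℕ) + 1 < n
  · rw [negacyclicShift_apply_of_lt _ h, negacyclicShift_apply_of_lt _ h, bBDual, bBDual,
      ← sub_eq_iff_eq_add', ← Finset.sum_sub_distrib, Finset.sum_eq_single ⟨k + 1, h⟩]
    · rw [if_pos le_rfl, if_neg (not_le.2 (Fin.lt_def.2 (Nat.lt_succ_self _)))]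
      ring
    · intro i _ hi
      simp only [Fin.le_def, ne_eq, Fin.ext_iff] at hi ⊢
      split_ifs <;> first | omega | ring
    · simp
  · have hsum : bBDual n a ⟨0, k.pos⟩ + bBDual n a k = 2 * a ⟨0, k.pos⟩ := by
      rw [bBDual, bBDual, ← Finset.sum_add_distrib, Finset.sum_eq_single ⟨0, k.pos⟩]
      · rw [if_pos le_rfl, if_pos (Fin.le_def.2 (Nat.zero_le _))]
        ring
      · intro i _ hi
        simp only [Fin.le_def, ne_eq, Fin.ext_iff] at hi ⊢
        split_ifs <;> first | omega | ring
      · simp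
    rw [negacyclicShift_apply_of_eq _ (by omega), negacyclicShift_apply_of_eq _ (by omega)]
    linarith

lemma negacyclicShift_dotReflection_of_isFixedBy
    (hc1 : ∀ i : ℤ, 1 ≤ i → i ≤ (n : ℤ) - 1 → c i = i + 1) (hc2 : c (n : ℤ) = -1)
    (hs : IsReflRootB n s a) (ht : IsReflRootB n t b) {x : Fin n → ℚ}
    (hx : IsFixedBy n (t * (s * c)) x) :
    negacyclicShift n (dotReflection a (dotReflection b x)) = x := by
  ext k
  rw [← dotProduct_signedBasis_coxeter hc1 hc2, ← dotProduct_signedBasis_mul_apply ht hs,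
    ← Equiv.Perm.mul_apply, mul_assoc, hx, dotProduct_signedBasis_coe]

lemma mem_span_bBDual_of_isFixedBy
    (hc1 : ∀ i : ℤ, 1 ≤ i → i ≤ (n : ℤ) - 1 → c i = i + 1) (hc2 : c (n : ℤ) = -1)
    (hs : IsReflRootB n s a) (ht : IsReflRootB n t b) {x : Fin n → ℚ}
    (hx : IsFixedBy n (t * (s * c)) x) :
    x ∈ Submodule.span ℚ {bBDual n a, bBDual n b} := by
  have h := negacyclicShift_dotReflection_of_isFixedBy hc1 hc2 hs ht hx
  rw [dotReflection_dotReflection] at h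
  set p := 2 * (a ⬝ᵥ dotReflection b x) / (a ⬝ᵥ a)
  set q := 2 * (b ⬝ᵥ x) / (b ⬝ᵥ b)
  have hx_eq : x = (p / 2) • bBDual n a + (q / 2) • bBDual n b := by
    rw [← sub_eq_zero]
    apply eq_zero_of_negacyclicShift_eq_self
    simp only [map_sub, map_add, map_smul, negacyclicShift_bBDual] at h ⊢
    linear_combination (norm := module) h
  rw [hx_eq]
  exact Submodule.add_mem _ (Submodule.smul_mem _ _ (Submodule.subset_span (by simp)))
    (Submodule.smul_mem _ _ (Submodule.subset_span (by simp)))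

lemma bBDual_dotProduct_eq_zero_of_isFixedBy
    (hc1 : ∀ i : ℤ, 1 ≤ i → i ≤ (n : ℤ) - 1 → c i = i + 1) (hc2 : c (n : ℤ) = -1)
    (hs : IsReflRootB n s a) (ht : IsReflRootB n t b) (hst : s ≠ t)
    (hfix : IsFixedBy n (t * (s * c)) (bBDual n a)) :
    bBDual n a ⬝ᵥ b = 0 := by
  have h := negacyclicShift_dotReflection_of_isFixedBy hc1 hc2 hs ht hfix
  rw [dotReflection_dotReflection] at h
  set p := 2 * (a ⬝ᵥ dotReflection b (bBDual n a)) / (a ⬝ᵥ a)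
  set q := 2 * (b ⬝ᵥ bBDual n a) / (b ⬝ᵥ b) with hq
  have hcomb : (2 - p) • a + (-q) • b = 0 := by
    apply negacyclicShift_injective
    simp only [map_sub, map_add, map_smul, map_zero, negacyclicShift_bBDual] at h ⊢
    linear_combination (norm := module) h
  have hq0 := (LinearIndependent.pair_iff.1 (linearIndependent hs ht hst) _ _ hcomb).2
  rw [neg_eq_zero, hq] at hq0
  rw [dotProduct_comm]
  simpa [dotProduct_self_ne_zero ht] using hq0

lemma bBDual_mem_of_isFixedBy
    (hc1 : ∀ i : ℤ, 1 ≤ i → i ≤ (n : ℤ) - 1 → c i = i + 1) (hc2 : c (n : ℤ) = -1)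
    (hs : IsReflRootB n s a) (ht : IsReflRootB n t b) {S : Submodule ℚ (Fin n → ℚ)}
    (hS : 2 ≤ finrank ℚ S) (hfix : ∀ x ∈ S, IsFixedBy n (t * (s * c)) x) :
    bBDual n a ∈ S := by
  have hle : S ≤ Submodule.span ℚ {bBDual n a, bBDual n b} := fun x hx =>
    mem_span_bBDual_of_isFixedBy hc1 hc2 hs ht (hfix x hx)
  rw [Submodule.eq_of_le_of_finrank_le hle ((finrank_span_pair_le _ _).trans hS)]
  exact Submodule.subset_span (by simp)

end TypeB

open TypeB in
theorem bB_vanishes_on_subordinate_roots_general (n : ℕ) (c : Equiv.Perm ℤ)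
    (hc1 : ∀ i : ℤ, 1 ≤ i → i ≤ (n : ℤ) - 1 → c i = i + 1)
    (hc2 : c (n : ℤ) = -1)
    (hc3 : ∀ i : ℤ, c (-i) = -(c i))
    (hc4 : ∀ i : ℤ, (n : ℤ) < |i| → c i = i)
    (s t : Equiv.Perm ℤ) (a b : Fin n → ℚ)
    (hs : IsReflRootB n s a) (ht : IsReflRootB n t b) (hst : s ≠ t)
    (h : absLe (reflB n) (s * t) c) :
    bB n a b = 0 := by
  obtain ⟨lc, hlc_len, hlc, hlc_prod⟩ := exists_list_prod_eq_coxeter hc1 hc2 hc3 hc4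
  have hinv : (s * t)⁻¹ * c = t * (s * c) := by
    rw [mul_inv_rev, inv_eq_of_mul_eq_one_right (IsReflRootB.mul_self hs),
      inv_eq_of_mul_eq_one_right (IsReflRootB.mul_self ht), mul_assoc]
  obtain ⟨lg, hlg_len, hlg, hlg_prod⟩ := exists_list_length_eq_absLength (T := reflB n)
    (t :: s :: lc) (List.forall_mem_cons.2 ⟨IsReflRootB.mem_reflB ht,
      List.forall_mem_cons.2 ⟨IsReflRootB.mem_reflB hs, hlc⟩⟩)
  simp only [List.prod_cons, hlc_prod] at hlg_len hlg_prod
  have hlg_short : lg.length + 2 ≤ n := by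
    have := hlc_prod ▸ absLength_le_length lc hlc
    have := two_le_absLength_mul hs ht hst
    rw [absLe, hinv] at h
    omega
  obtain ⟨S, hS, hSfix⟩ := exists_isFixedBy_subspace lg hlg
  rw [hlg_prod] at hSfix
  rw [bB_eq_bBDual_dotProduct]
  exact bBDual_dotProduct_eq_zero_of_isFixedBy hc1 hc2 hs ht hst
    (hSfix _ (bBDual_mem_of_isFixedBy hc1 hc2 hs ht (by omega) hSfix))

/-- If `s` and `t` are distinct reflections in `T(Bₙ)` with `s * t ≤ c` in the
absolute order, where `c = [1 2 … n]` is the Coxeter element, then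
`b_B(α_s, α_t) = 0`. -/
theorem bB_vanishes_on_subordinate_roots (n : ℕ) (hn : 2 ≤ n) (c : Equiv.Perm ℤ)
    (hc1 : ∀ i : ℤ, 1 ≤ i → i ≤ (n : ℤ) - 1 → c i = i + 1)
    (hc2 : c (n : ℤ) = -1)
    (hc3 : ∀ i : ℤ, c (-i) = -(c i))
    (hc4 : ∀ i : ℤ, (n : ℤ) < |i| → c i = i)
    (s t : Equiv.Perm ℤ) (a b : Fin n → ℚ)
    (hs : IsReflRootB n s a) (ht : IsReflRootB n t b) (hst : s ≠ t)
    (h : absLe (reflB n) (s * t) c) :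
    bB n a b = 0 :=
  bB_vanishes_on_subordinate_roots_general n c hc1 hc2 hc3 hc4 s t a b hs ht hst h
end

section
/- Let n ≥ 3. Let Γ be the graph whose vertices are the complete flags of 𝔽_2^{n−1}, two flags being adjacent iff they differ in exactly one subspace, and let Γ_P be the induced subgraph on the flags all of whose subspaces are partition subspaces. Then for any two complete flags C and D all of whose subspaces are partition subspaces, the shortest-path distance from C to D in Γ_P equals the shortest-path distance from C to D in Γ. -/
/-- A subspace of `𝔽₂ⁿ⁻¹` is a partition subspace if it comes from a partition. -/
def IsPartitionSubspace (n : ℕ)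
    (U : Submodule (ZMod 2) (Fin (n - 1) → ZMod 2)) : Prop :=
  ∃ π : Setoid (Fin n), U = partSubspace n π

/-- A complete flag in `𝔽₂ⁿ⁻¹`: a chain of subspaces `U₁ ⊂ ⋯ ⊂ U_{n-2}` with
`dim Uₖ = k`. -/
abbrev VFlag (n : ℕ) : Type :=
  {U : Fin (n - 2) → Submodule (ZMod 2) (Fin (n - 1) → ZMod 2) //
    StrictMono U ∧ ∀ k : Fin (n - 2), Module.finrank (ZMod 2) (U k) = (k : ℕ) + 1}

/-- The graph on complete flags of `𝔽₂ⁿ⁻¹`: two flags are adjacent iff they differ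
in exactly one subspace. -/
def flagGraph (n : ℕ) : SimpleGraph (VFlag n) where
  Adj C D := ∃! k : Fin (n - 2), C.1 k ≠ D.1 k
  symm := by
    constructor
    rintro C D ⟨k, hk, hu⟩
    exact ⟨k, Ne.symm hk, fun l hl => hu l (Ne.symm hl)⟩
  loopless := by
    constructor
    rintro C ⟨k, hk, -⟩
    exact hk rfl

/-!
Two complete flags `F, G` of a `d`-dimensional space have a relative position, a permutation
`w` of `{1, …, d}` read off from the table `dim (F k ⊓ G j)`, and the number of inversions of
`w` is the gallery distance from `F` to `G`: changing one member of `F` changes `w` by at most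
an adjacent transposition, while for `F ≠ G` replacing a suitable `F k` by `F (k - 1) ⊔ G j`
removes an inversion. Partition subspaces are closed under `⊔` (`partSubspace` is a left
adjoint), so this replacement keeps a partition flag among partition flags, and a shortest
gallery between two partition flags can be found inside them.
-/

open Module

theorem Nat.eq_and_eq_or_eq_and_eq_of_forall_ite_le {a b c d : ℕ}
    (h : ∀ j, (if a ≤ j then 1 else 0) + (if b ≤ j then 1 else 0) =
      (if c ≤ j then 1 else 0) + (if d ≤ j then 1 else 0)) :
    (a = c ∧ b = d) ∨ (a = d ∧ b = c) := by
  have hmin_max : ∀ {a b c d : ℕ},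
      (∀ j, (if a ≤ j then 1 else 0) + (if b ≤ j then 1 else 0) =
        (if c ≤ j then 1 else 0) + (if d ≤ j then 1 else 0)) →
      min c d ≤ min a b ∧ max c d ≤ max a b := by
    intro a b c d h
    have h₁ := h (min a b)
    have h₂ := h (max a b)
    split_ifs at h₁ h₂ <;> omega
  have h₁ := hmin_max h
  have h₂ := hmin_max fun j => (h j).symm
  omega

namespace SimpleGraph

variable {α : Type*} {G : SimpleGraph α} {f : α → ℕ} {s : Set α} {u v : α}

theorem Walk.le_length_of_adj_le_add_one (hv : f v = 0)
    (hf : ∀ x y, G.Adj x y → f x ≤ f y + 1) (p : G.Walk u v) : f u ≤ p.length := by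
  induction p with
  | nil => simp [hv]
  | cons h p ih => rw [Walk.length_cons]; exact (hf _ _ h).trans (by omega)

theorem exists_walk_induce_length_le (hv : v ∈ s)
    (hf : ∀ x ∈ s, x ≠ v → ∃ y ∈ s, G.Adj x y ∧ f y < f x) (hu : u ∈ s) :
    ∃ p : (G.induce s).Walk ⟨u, hu⟩ ⟨v, hv⟩, p.length ≤ f u := by
  induction h : f u using Nat.strong_induction_on generalizing u with
  | _ N ih =>
    by_cases huv : u = v
    · subst huv
      exact ⟨Walk.nil, by simp⟩
    · obtain ⟨y, hy, hadj, hlt⟩ := hf u hu huv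
      obtain ⟨p, hp⟩ := ih (f y) (h ▸ hlt) hy rfl
      refine ⟨Walk.cons (show (G.induce s).Adj ⟨u, hu⟩ ⟨y, hy⟩ from hadj) p, ?_⟩
      rw [Walk.length_cons]
      omega

theorem dist_induce_eq_of_adj_le_add_one (hu : u ∈ s) (hv : v ∈ s) (hfv : f v = 0)
    (hf_adj : ∀ x y, G.Adj x y → f x ≤ f y + 1)
    (hf_desc : ∀ x ∈ s, x ≠ v → ∃ y ∈ s, G.Adj x y ∧ f y < f x) :
    (G.induce s).dist ⟨u, hu⟩ ⟨v, hv⟩ = G.dist u v := by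
  obtain ⟨p, hp⟩ := exists_walk_induce_length_le hv hf_desc hu
  have hreach : G.Reachable u v := ⟨p.map (Embedding.induce s).toHom⟩
  obtain ⟨q, hq⟩ := hreach.exists_walk_length_eq_dist
  obtain ⟨r, hr⟩ := Reachable.exists_walk_length_eq_dist ⟨p⟩
  have hq_le : f u ≤ q.length := q.le_length_of_adj_le_add_one hfv hf_adj
  have hr_ge : G.dist u v ≤ (r.map (Embedding.induce s).toHom).length := G.dist_le _
  rw [Walk.length_map] at hr_ge
  have := (G.induce s).dist_le p
  omega

end SimpleGraph

section CompleteFlag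

variable {K V : Type*} [DivisionRing K] [AddCommGroup V] [Module K V]

theorem Submodule.finrank_inf_add_finrank_le_of_le [FiniteDimensional K V] {A B : Submodule K V}
    (hAB : A ≤ B) (W : Submodule K V) :
    finrank K ↥(B ⊓ W) + finrank K A ≤ finrank K ↥(A ⊓ W) + finrank K B := by
  have h := Submodule.finrank_sup_add_finrank_inf_eq (B ⊓ W) A
  rw [inf_right_comm, inf_eq_right.2 hAB] at h
  have := Submodule.finrank_mono (sup_le inf_le_left hAB : B ⊓ W ⊔ A ≤ B)
  omega

/-- A complete flag `0 = F 0 < F 1 < ⋯ < F d = V`, indexed by dimension and continued by `V`. -/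
structure IsCompleteFlag (F : ℕ → Submodule K V) : Prop where
  monotone : Monotone F
  finrank_eq : ∀ j, finrank K (F j) = min j (finrank K V)

/-- The relative position of two complete flags is the permutation `k ↦ relPos F G k` of
`{1, …, dim V}`: the first index `j` such that `F k ⊓ G j` is not contained in `F (k - 1)`. -/
noncomputable def relPos (F G : ℕ → Submodule K V) (k : ℕ) : ℕ :=
  sInf {j | ¬F k ⊓ G j ≤ F (k - 1)}

/-- The number of inversions of `relPos F G`: the `k`-th summand counts the `a < k` with
`relPos F G k < relPos F G a`, since `dim (F (k - 1) ⊓ G j) = #{a < k | relPos F G a ≤ j}`. -/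
noncomputable def relPosLength (F G : ℕ → Submodule K V) : ℕ :=
  ∑ k ∈ Finset.Icc 1 (finrank K V), (k - 1 - finrank K ↥(F (k - 1) ⊓ G (relPos F G k - 1)))

theorem relPos_congr {F F' G : ℕ → Submodule K V} {k : ℕ} (h : F' k = F k)
    (h' : F' (k - 1) = F (k - 1)) : relPos F' G k = relPos F G k := by
  simp only [relPos, h, h']

namespace IsCompleteFlag

variable {F F' G : ℕ → Submodule K V}

theorem finrank_le (hF : IsCompleteFlag F) (j : ℕ) : finrank K (F j) ≤ j := by
  rw [hF.finrank_eq]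
  exact min_le_left _ _

theorem update (hF : IsCompleteFlag F) {k : ℕ} {X : Submodule K V} (hkd : k ≤ finrank K V)
    (hlow : F (k - 1) ≤ X) (hhigh : X ≤ F (k + 1)) (hX : finrank K X = k) :
    IsCompleteFlag (Function.update F k X) where
  monotone := monotone_nat_of_le_succ fun i => by
    simp only [Function.update_apply]
    split_ifs with h₁ h₂ h₂
    · omega
    · subst h₁; exact hhigh
    · subst h₂; exact hlow
    · exact hF.monotone i.le_succ
  finrank_eq j := by
    by_cases h : j = k
    · subst h; rw [Function.update_self, hX, min_eq_left hkd]
    · rw [Function.update_of_ne h, hF.finrank_eq]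

variable [FiniteDimensional K V]

theorem eq_bot (hF : IsCompleteFlag F) : F 0 = ⊥ :=
  Submodule.finrank_eq_zero.1 (by simp [hF.finrank_eq])

theorem eq_top (hF : IsCompleteFlag F) {j : ℕ} (hj : finrank K V ≤ j) : F j = ⊤ :=
  Submodule.eq_top_of_finrank_eq (by rw [hF.finrank_eq, min_eq_right hj])

theorem not_le_pred (hF : IsCompleteFlag F) {k : ℕ} (hk : 1 ≤ k) (hkd : k ≤ finrank K V) :
    ¬F k ≤ F (k - 1) := fun h => by
  have := Submodule.finrank_mono h
  rw [hF.finrank_eq, hF.finrank_eq] at this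
  omega

theorem mem_Ico_of_ne (hF : IsCompleteFlag F) (hF' : IsCompleteFlag F') {k : ℕ}
    (h : F' k ≠ F k) : k ∈ Set.Ico 1 (finrank K V) := by
  refine ⟨Nat.pos_of_ne_zero fun hk => h ?_, lt_of_not_ge fun hk => h ?_⟩
  · rw [hk, hF.eq_bot, hF'.eq_bot]
  · rw [hF.eq_top hk, hF'.eq_top hk]

theorem inf_le_pred_iff (hF : IsCompleteFlag F) (hG : IsCompleteFlag G) {k : ℕ} (hk : 1 ≤ k)
    (hkd : k ≤ finrank K V) (j : ℕ) : F k ⊓ G j ≤ F (k - 1) ↔ j < relPos F G k := by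
  have hne : {j | ¬F k ⊓ G j ≤ F (k - 1)}.Nonempty :=
    ⟨finrank K V, by simpa [hG.eq_top le_rfl] using hF.not_le_pred hk hkd⟩
  refine ⟨fun h => lt_of_not_ge fun hj => Nat.sInf_mem hne ?_, fun hj => ?_⟩
  · exact (inf_le_inf_left _ (hG.monotone hj)).trans h
  · simpa using Nat.notMem_of_lt_sInf hj

theorem one_le_relPos (hF : IsCompleteFlag F) (hG : IsCompleteFlag G) {k : ℕ} (hk : 1 ≤ k)
    (hkd : k ≤ finrank K V) : 1 ≤ relPos F G k :=
  (hF.inf_le_pred_iff hG hk hkd 0).1 (by simp [hG.eq_bot])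

theorem finrank_inf_eq (hF : IsCompleteFlag F) (hG : IsCompleteFlag G) {k : ℕ} (hk : 1 ≤ k)
    (hkd : k ≤ finrank K V) (j : ℕ) :
    finrank K ↥(F k ⊓ G j) =
      finrank K ↥(F (k - 1) ⊓ G j) + if relPos F G k ≤ j then 1 else 0 := by
  have hle : F (k - 1) ⊓ G j ≤ F k ⊓ G j := inf_le_inf_right _ (hF.monotone (Nat.sub_le k 1))
  split_ifs with hj
  · have hlt : F (k - 1) ⊓ G j < F k ⊓ G j := lt_of_le_of_ne hle fun h =>
      (hF.inf_le_pred_iff hG hk hkd j).not.2 (not_lt.2 hj) (h ▸ inf_le_left)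
    have h₁ := Submodule.finrank_lt_finrank_of_lt hlt
    have h₂ := Submodule.finrank_inf_add_finrank_le_of_le (hF.monotone (Nat.sub_le k 1)) (G j)
    rw [hF.finrank_eq, hF.finrank_eq] at h₂
    omega
  · rw [add_zero, le_antisymm (le_inf ((hF.inf_le_pred_iff hG hk hkd j).2 (not_le.1 hj))
      inf_le_right) hle]

theorem relPos_self (hF : IsCompleteFlag F) {k : ℕ} (hk : 1 ≤ k) (hkd : k ≤ finrank K V) :
    relPos F F k = k := by
  refine (eq_of_forall_lt_iff fun j => ?_).symm
  rw [← hF.inf_le_pred_iff hF hk hkd]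
  refine ⟨fun hj => inf_le_right.trans (hF.monotone (by omega)), fun h => ?_⟩
  by_contra hj
  rw [inf_eq_left.2 (hF.monotone (not_lt.1 hj))] at h
  exact hF.not_le_pred hk hkd h

theorem relPosLength_self (hF : IsCompleteFlag F) : relPosLength F F = 0 :=
  Finset.sum_eq_zero fun k hk => by
    rw [Finset.mem_Icc] at hk
    rw [hF.relPos_self hk.1 hk.2, inf_idem, hF.finrank_eq]
    omega

open Finset in
/-- The left-hand side is symmetric in `relPos F G k` and `relPos F G (k + 1)`. -/
theorem relPosLength_add (hF : IsCompleteFlag F) (hG : IsCompleteFlag G) {k : ℕ} (hk : 1 ≤ k)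
    (hkd : k < finrank K V) :
    relPosLength F G + (if relPos F G k < relPos F G (k + 1) then 1 else 0) +
        finrank K ↥(F (k - 1) ⊓ G (relPos F G k - 1)) +
        finrank K ↥(F (k - 1) ⊓ G (relPos F G (k + 1) - 1)) =
      ∑ i ∈ ((Icc 1 (finrank K V)).erase k).erase (k + 1),
          (i - 1 - finrank K ↥(F (i - 1) ⊓ G (relPos F G i - 1))) + (2 * k - 1) := by
  rw [relPosLength, ← add_sum_erase _ _ (mem_Icc.2 ⟨hk, hkd.le⟩),
    ← add_sum_erase _ _ (a := k + 1) (mem_erase.2 ⟨by omega, mem_Icc.2 ⟨by omega, hkd⟩⟩),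
    Nat.add_sub_cancel, hF.finrank_inf_eq hG (by omega) hkd.le]
  have hb := hF.one_le_relPos hG (by omega : 1 ≤ k + 1) hkd
  have h₁ := Submodule.finrank_mono (inf_le_left : F (k - 1) ⊓ G (relPos F G k - 1) ≤ _)
  have h₂ := Submodule.finrank_mono (inf_le_left : F (k - 1) ⊓ G (relPos F G (k + 1) - 1) ≤ _)
  have h₃ := hF.finrank_le (k - 1)
  split_ifs <;> omega

/-- Row `k + 1` of the table `finrank (F i ⊓ G j)` is unchanged and records both values. -/
theorem relPos_eq_or_swap (hF : IsCompleteFlag F) (hF' : IsCompleteFlag F')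
    (hG : IsCompleteFlag G) {k : ℕ} (hk : 1 ≤ k) (hkd : k < finrank K V)
    (hFF' : ∀ i ≠ k, F' i = F i) :
    (relPos F' G k = relPos F G k ∧ relPos F' G (k + 1) = relPos F G (k + 1)) ∨
      (relPos F' G k = relPos F G (k + 1) ∧ relPos F' G (k + 1) = relPos F G k) := by
  refine Nat.eq_and_eq_or_eq_and_eq_of_forall_ite_le fun j => ?_
  have h := hF.finrank_inf_eq hG (by omega : 1 ≤ k + 1) hkd j
  have h' := hF'.finrank_inf_eq hG (by omega : 1 ≤ k + 1) hkd j
  rw [Nat.add_sub_cancel, hF.finrank_inf_eq hG hk hkd.le] at h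
  rw [Nat.add_sub_cancel, hF'.finrank_inf_eq hG hk hkd.le, hFF' (k + 1) (by omega),
    hFF' (k - 1) (by omega)] at h'
  omega

theorem relPosLength_add_ite_eq (hF : IsCompleteFlag F) (hF' : IsCompleteFlag F')
    (hG : IsCompleteFlag G) {k : ℕ} (hk : 1 ≤ k) (hkd : k < finrank K V)
    (hFF' : ∀ i ≠ k, F' i = F i) :
    relPosLength F' G + (if relPos F' G k < relPos F' G (k + 1) then 1 else 0) =
      relPosLength F G + (if relPos F G k < relPos F G (k + 1) then 1 else 0) := by
  have e := hF.relPosLength_add hG hk hkd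
  have e' := hF'.relPosLength_add hG hk hkd
  have hrest : ∀ i ∈ ((Finset.Icc 1 (finrank K V)).erase k).erase (k + 1),
      i - 1 - finrank K ↥(F' (i - 1) ⊓ G (relPos F' G i - 1)) =
        i - 1 - finrank K ↥(F (i - 1) ⊓ G (relPos F G i - 1)) := fun i hi => by
    simp only [Finset.mem_erase, Finset.mem_Icc] at hi
    rw [relPos_congr (hFF' i (by omega)) (hFF' (i - 1) (by omega)), hFF' (i - 1) (by omega)]
  rw [Finset.sum_congr rfl hrest, hFF' (k - 1) (by omega)] at e'
  rcases hF.relPos_eq_or_swap hF' hG hk hkd hFF' with ⟨h₁, h₂⟩ | ⟨h₁, h₂⟩ <;>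
    rw [h₁, h₂] at e' ⊢ <;> split_ifs at e e' ⊢ <;> omega

theorem relPosLength_le_add_one (hF : IsCompleteFlag F) (hF' : IsCompleteFlag F')
    (hG : IsCompleteFlag G) {k : ℕ} (hFF' : ∀ i ≠ k, F' i = F i) :
    relPosLength F G ≤ relPosLength F' G + 1 := by
  by_cases h : F' k = F k
  · obtain rfl : F' = F := funext fun i => by by_cases hi : i = k <;> simp_all
    omega
  · obtain ⟨hk, hkd⟩ := hF.mem_Ico_of_ne hF' h
    have := hF.relPosLength_add_ite_eq hF' hG hk hkd hFF'
    split_ifs at this <;> omega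

/-- Take `j` the first index with `F j ≠ G j` and `k + 1` the first index with
`G j ≤ F (k + 1)`. -/
theorem exists_descent (hF : IsCompleteFlag F) (hG : IsCompleteFlag G) (hFG : F ≠ G) :
    ∃ j k, 1 ≤ j ∧ j ≤ k ∧ k < finrank K V ∧
      G (j - 1) ≤ F (k - 1) ∧ G j ≤ F (k + 1) ∧ ¬G j ≤ F k := by
  classical
  have hex : ∃ j, F j ≠ G j := Function.ne_iff.1 hFG
  have hj : F (Nat.find hex) ≠ G (Nat.find hex) := Nat.find_spec hex
  obtain ⟨hj₁, hjd⟩ := hG.mem_Ico_of_ne hF hj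
  have htop : G (Nat.find hex) ≤ F (finrank K V) := by rw [hF.eq_top le_rfl]; exact le_top
  have hexq : ∃ q, G (Nat.find hex) ≤ F q := ⟨_, htop⟩
  have hqd : Nat.find hexq ≤ finrank K V := Nat.find_min' hexq htop
  have hjq : Nat.find hex < Nat.find hexq := lt_of_not_ge fun hqj =>
    hj (Submodule.eq_of_le_of_finrank_eq ((Nat.find_spec hexq).trans (hF.monotone hqj))
      (by rw [hG.finrank_eq, hF.finrank_eq])).symm
  refine ⟨Nat.find hex, Nat.find hexq - 1, hj₁, by omega, by omega, ?_, ?_,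
    Nat.find_min hexq (by omega)⟩
  · rw [← not_not.1 (Nat.find_min hex (by omega : Nat.find hex - 1 < Nat.find hex))]
    exact hF.monotone (by omega)
  · rw [Nat.sub_add_cancel (by omega)]
    exact Nat.find_spec hexq

theorem finrank_inf_eq_sub_one (hG : IsCompleteFlag G) {A : Submodule K V} {j : ℕ}
    (hj : 1 ≤ j) (hjd : j ≤ finrank K V) (hlow : G (j - 1) ≤ A) (hnot : ¬G j ≤ A) :
    finrank K ↥(A ⊓ G j) = j - 1 := by
  have h₁ := Submodule.finrank_mono (le_inf hlow (hG.monotone (Nat.sub_le j 1)))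
  have h₂ := Submodule.finrank_lt_finrank_of_lt
    (lt_of_le_of_ne inf_le_right fun h => hnot (inf_eq_right.1 h))
  rw [hG.finrank_eq] at h₁ h₂
  omega

theorem exists_update_relPosLength_lt (hF : IsCompleteFlag F) (hG : IsCompleteFlag G)
    (hFG : F ≠ G) :
    ∃ k j, k < finrank K V ∧ j < finrank K V ∧
      IsCompleteFlag (Function.update F k (F (k - 1) ⊔ G j)) ∧ F (k - 1) ⊔ G j ≠ F k ∧
      relPosLength (Function.update F k (F (k - 1) ⊔ G j)) G < relPosLength F G := by
  obtain ⟨j, k, hj, hjk, hkd, hlow, hhigh, hnot⟩ := hF.exists_descent hG hFG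
  have hk : 1 ≤ k := hj.trans hjk
  have hpred : F (k - 1) ≤ F k := hF.monotone (Nat.sub_le k 1)
  have hnot' : ¬G j ≤ F (k - 1) := fun h => hnot (h.trans hpred)
  have hmeet := hG.finrank_inf_eq_sub_one hj (by omega) hlow hnot'
  have hX : finrank K ↥(F (k - 1) ⊔ G j) = k := by
    have := Submodule.finrank_sup_add_finrank_inf_eq (F (k - 1)) (G j)
    rw [hF.finrank_eq, hG.finrank_eq, hmeet] at this
    omega
  have hF' := hF.update hkd.le le_sup_left (sup_le (hF.monotone (by omega)) hhigh) hX
  have hFF' : ∀ i ≠ k, Function.update F k (F (k - 1) ⊔ G j) i = F i :=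
    fun i hi => Function.update_of_ne hi _ _
  have h₁ : relPos (Function.update F k (F (k - 1) ⊔ G j)) G k ≤ j :=
    not_lt.1 fun h => hnot' <| by
      have := (hF'.inf_le_pred_iff hG hk hkd.le j).2 h
      rwa [Function.update_self, inf_eq_right.2 le_sup_right, hFF' (k - 1) (by omega)] at this
  have h₂ : j < relPos F G k := by
    have := hF.finrank_inf_eq hG hk hkd.le j
    rw [hG.finrank_inf_eq_sub_one hj (by omega) (hlow.trans hpred) hnot, hmeet] at this
    split_ifs at this <;> omega
  refine ⟨k, j, hkd, by omega, hF', fun h => hnot (h ▸ le_sup_right), ?_⟩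
  have := hF.relPosLength_add_ite_eq hF' hG hk hkd hFF'
  rcases hF.relPos_eq_or_swap hF' hG hk hkd hFF' with ⟨h, -⟩ | ⟨h₃, h₄⟩
  · omega
  · rw [h₃, h₄, if_pos (by omega), if_neg (by omega)] at this
    omega

end IsCompleteFlag

end CompleteFlag

section Partition

variable {n : ℕ}

def partSetoid (n : ℕ) (U : Submodule (ZMod 2) (Fin (n - 1) → ZMod 2)) : Setoid (Fin n) where
  r i j := unitVec n i + unitVec n j ∈ U
  iseqv :=
    { refl := fun i => by simp [ZModModule.add_self]
      symm := fun h => by rwa [add_comm]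
      trans := fun h₁ h₂ => by simpa [ZModModule.add_add_add_cancel] using U.add_mem h₁ h₂ }

theorem unitVec_add_mem_partSubspace {π : Setoid (Fin n)} {i j : Fin n} (h : π i j) :
    unitVec n i + unitVec n j ∈ partSubspace n π := by
  rcases lt_trichotomy i j with hij | rfl | hij
  · exact Submodule.subset_span ⟨i, j, hij, h, rfl⟩
  · rw [ZModModule.add_self]
    exact zero_mem _
  · rw [add_comm]
    exact Submodule.subset_span ⟨j, i, hij, π.symm h, rfl⟩

theorem gc_partSubspace_partSetoid (n : ℕ) :
    GaloisConnection (partSubspace n) (partSetoid n) := fun _ _ =>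
  ⟨fun h _ _ hij => h (unitVec_add_mem_partSubspace hij),
    fun h => Submodule.span_le.2 <| by rintro _ ⟨i, j, -, hij, rfl⟩; exact h hij⟩

theorem supClosed_isPartitionSubspace (n : ℕ) : SupClosed {U | IsPartitionSubspace n U} := by
  rintro _ ⟨π, rfl⟩ _ ⟨σ, rfl⟩
  exact ⟨π ⊔ σ, (gc_partSubspace_partSetoid n).l_sup.symm⟩

theorem isPartitionSubspace_bot (n : ℕ) : IsPartitionSubspace n ⊥ :=
  ⟨⊥, (gc_partSubspace_partSetoid n).l_bot.symm⟩

end Partition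

namespace VFlag

variable {n : ℕ}

def toSeq (C : VFlag n) : ℕ → Submodule (ZMod 2) (Fin (n - 1) → ZMod 2)
  | 0 => ⊥
  | j + 1 => if h : j < n - 2 then C.1 ⟨j, h⟩ else ⊤

theorem toSeq_succ_of_lt (C : VFlag n) {j : ℕ} (h : j < n - 2) :
    toSeq C (j + 1) = C.1 ⟨j, h⟩ :=
  dif_pos h

theorem toSeq_succ_eq_top (C : VFlag n) {j : ℕ} (h : n - 2 ≤ j) : toSeq C (j + 1) = ⊤ :=
  dif_neg (not_lt.2 h)

theorem toSeq_succ (C : VFlag n) (s : Fin (n - 2)) : toSeq C (s + 1) = C.1 s :=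
  toSeq_succ_of_lt C s.2

theorem isCompleteFlag_toSeq (C : VFlag n) : IsCompleteFlag (toSeq C) where
  monotone := monotone_nat_of_le_succ fun
    | 0 => bot_le
    | j + 1 => by
      by_cases h : j + 1 < n - 2
      · rw [toSeq_succ_of_lt C h, toSeq_succ_of_lt C (by omega)]
        exact C.2.1.monotone (Fin.mk_le_mk.2 j.le_succ)
      · rw [toSeq_succ_eq_top C (not_lt.1 h)]
        exact le_top
  finrank_eq
    | 0 => by rw [toSeq, finrank_bot]; rfl
    | j + 1 => by
      rw [finrank_fin_fun]
      by_cases h : j < n - 2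
      · rw [toSeq_succ_of_lt C h, C.2.2, Fin.val_mk]
        omega
      · rw [toSeq_succ_eq_top C (not_lt.1 h), finrank_top, finrank_fin_fun]
        omega

theorem toSeq_mem {S : Set (Submodule (ZMod 2) (Fin (n - 1) → ZMod 2))} (hbot : ⊥ ∈ S)
    {C : VFlag n} (hC : ∀ s, C.1 s ∈ S) {j : ℕ} (hj : j < n - 1) : toSeq C j ∈ S :=
  match j with
  | 0 => hbot
  | j + 1 => toSeq_succ C ⟨j, by omega⟩ ▸ hC _

theorem toSeq_injective : Function.Injective (toSeq (n := n)) := fun C E h =>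
  Subtype.ext <| funext fun s => by rw [← toSeq_succ, h, toSeq_succ]

theorem exists_eq_succ_of_toSeq_ne {C E : VFlag n} {i : ℕ} (h : toSeq C i ≠ toSeq E i) :
    ∃ s : Fin (n - 2), i = s + 1 ∧ C.1 s ≠ E.1 s :=
  match i with
  | 0 => absurd rfl h
  | j + 1 =>
    if hj : j < n - 2 then ⟨⟨j, hj⟩, rfl, by simpa [toSeq, hj] using h⟩
    else absurd (by simp [toSeq, hj]) h

theorem flagGraph_adj_iff {C E : VFlag n} :
    (flagGraph n).Adj C E ↔ ∃! i, toSeq C i ≠ toSeq E i := by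
  constructor
  · rintro ⟨s, hs, huniq⟩
    refine ⟨s + 1, by beta_reduce; rwa [toSeq_succ, toSeq_succ], fun i hi => ?_⟩
    obtain ⟨s', rfl, hs'⟩ := exists_eq_succ_of_toSeq_ne hi
    rw [huniq s' hs']
  · rintro ⟨i, hi, huniq⟩
    obtain ⟨s, rfl, hs⟩ := exists_eq_succ_of_toSeq_ne hi
    refine ⟨s, hs, fun s' hs' => Fin.ext ?_⟩
    have := huniq (s' + 1) (by beta_reduce; rwa [toSeq_succ, toSeq_succ])
    omega

def ofSeq (F : ℕ → Submodule (ZMod 2) (Fin (n - 1) → ZMod 2)) (hF : IsCompleteFlag F) :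
    VFlag n :=
  ⟨fun s => F (s + 1),
    fun a b hab => lt_of_le_of_ne (hF.monotone (by have := Fin.lt_def.1 hab; omega)) fun h => by
      have := congrArg (fun U : Submodule (ZMod 2) (Fin (n - 1) → ZMod 2) => finrank (ZMod 2) U) h
      simp only [hF.finrank_eq, finrank_fin_fun] at this
      omega,
    fun s => by rw [hF.finrank_eq, finrank_fin_fun]; omega⟩

theorem toSeq_ofSeq (F : ℕ → Submodule (ZMod 2) (Fin (n - 1) → ZMod 2))
    (hF : IsCompleteFlag F) : toSeq (ofSeq F hF) = F := funext fun
  | 0 => hF.eq_bot.symm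
  | j + 1 => by
    by_cases h : j < n - 2
    · exact toSeq_succ_of_lt _ h
    · rw [toSeq_succ_eq_top _ (not_lt.1 h), hF.eq_top (by rw [finrank_fin_fun]; omega)]

theorem relPosLength_toSeq_le_of_adj {C E : VFlag n} (D : VFlag n)
    (h : (flagGraph n).Adj C E) :
    relPosLength (toSeq C) (toSeq D) ≤ relPosLength (toSeq E) (toSeq D) + 1 := by
  obtain ⟨k, -, huniq⟩ := flagGraph_adj_iff.1 h
  exact (isCompleteFlag_toSeq C).relPosLength_le_add_one (isCompleteFlag_toSeq E)
    (isCompleteFlag_toSeq D) (k := k) fun i hi => not_not.1 fun h' => hi (huniq i (Ne.symm h'))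

theorem exists_adj_relPosLength_lt
    {S : Set (Submodule (ZMod 2) (Fin (n - 1) → ZMod 2))} (hS : SupClosed S) (hbot : ⊥ ∈ S)
    {C D : VFlag n} (hC : ∀ s, C.1 s ∈ S) (hD : ∀ s, D.1 s ∈ S) (hCD : C ≠ D) :
    ∃ E : VFlag n, (∀ s, E.1 s ∈ S) ∧ (flagGraph n).Adj C E ∧
      relPosLength (toSeq E) (toSeq D) < relPosLength (toSeq C) (toSeq D) := by
  obtain ⟨k, j, hkd, hjd, hF', hne, hlt⟩ :=
    (isCompleteFlag_toSeq C).exists_update_relPosLength_lt (isCompleteFlag_toSeq D)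
      (toSeq_injective.ne hCD)
  rw [finrank_fin_fun] at hkd hjd
  refine ⟨ofSeq _ hF', fun s => ?_, flagGraph_adj_iff.2 ⟨k, ?_, fun i hi => ?_⟩,
    by rwa [toSeq_ofSeq]⟩
  · show Function.update (toSeq C) k _ (s + 1) ∈ S
    rw [Function.update_apply]
    split_ifs
    · exact hS (toSeq_mem hbot hC (by omega)) (toSeq_mem hbot hD hjd)
    · exact toSeq_mem hbot hC (by omega)
  · beta_reduce
    rw [toSeq_ofSeq, Function.update_self]
    exact hne.symm
  · rw [toSeq_ofSeq] at hi
    by_contra hik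
    exact hi (Function.update_of_ne hik _ _).symm

end VFlag

theorem flag_dist_partition_eq_building_general (n : ℕ) (C D : VFlag n)
    (hC : ∀ k, IsPartitionSubspace n (C.1 k))
    (hD : ∀ k, IsPartitionSubspace n (D.1 k)) :
    ((flagGraph n).induce {E : VFlag n | ∀ k, IsPartitionSubspace n (E.1 k)}).dist
        ⟨C, hC⟩ ⟨D, hD⟩ = (flagGraph n).dist C D := by
  apply SimpleGraph.dist_induce_eq_of_adj_le_add_one
    (f := fun E => relPosLength (VFlag.toSeq E) (VFlag.toSeq D))
  · exact (VFlag.isCompleteFlag_toSeq D).relPosLength_self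
  · exact fun _ _ => VFlag.relPosLength_toSeq_le_of_adj D
  · exact fun E hE hED => VFlag.exists_adj_relPosLength_lt
      (supClosed_isPartitionSubspace n) (isPartitionSubspace_bot n) hE hD hED

/-- For complete flags all of whose subspaces are partition subspaces, the graph
distance computed within the induced subgraph on such flags coincides with the
graph distance in the full flag graph. -/
theorem flag_dist_partition_eq_building (n : ℕ) (hn : 3 ≤ n) (C D : VFlag n)
    (hC : ∀ k, IsPartitionSubspace n (C.1 k))
    (hD : ∀ k, IsPartitionSubspace n (D.1 k)) :
    ((flagGraph n).induce {E : VFlag n | ∀ k, IsPartitionSubspace n (E.1 k)}).dist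
        ⟨C, hC⟩ ⟨D, hD⟩ = (flagGraph n).dist C D :=
  flag_dist_partition_eq_building_general n C D hC hD
end

section
/- (Link Property for non-crossing partitions.) Let n ≥ 5, let u_1, …, u_{n−1} be a basis of 𝔽_2^{n−1}, and let S be a subset of {1, …, n−1} with ∅ ≠ S ≠ {1, …, n−1}; put U := span{u_i : i ∈ S}. Suppose that for every subset S′ of {1, …, n−1} with ∅ ≠ S′ ≠ {1, …, n−1}, S′ ≠ S, and either S′ ⊂ S or S ⊂ S′, the subspace span{u_i : i ∈ S′} is a non-crossing partition subspace. Then U is a non-crossing partition subspace. -/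
/-- A partition of `{1, …, n}` (as a `Setoid` on `Fin n`) is non-crossing if there
are no `a < b < c < d` with `a, c` in one block and `b, d` in a different block. -/
def IsNonCrossing (n : ℕ) (π : Setoid (Fin n)) : Prop :=
  ∀ a b c d : Fin n, a < b → b < c → c < d → π.r a c → π.r b d → π.r a b

/-- A subspace of `𝔽₂ⁿ⁻¹` is a non-crossing partition subspace if it comes from a
non-crossing partition. -/
def IsNCPartitionSubspace (n : ℕ)
    (U : Submodule (ZMod 2) (Fin (n - 1) → ZMod 2)) : Prop :=
  ∃ π : Setoid (Fin n), IsNonCrossing n π ∧ U = partSubspace n π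

/-!
Let `π` be the partition `i ~ j ↔ e_i + e_j ∈ U`; we show that `π` is non-crossing and that `U` is
spanned by its edge vectors `e_i + e_j`, so that `U = f(π)`.

Spanning: if `|S| ≥ 2`, `U` is the sum of two neighbours `span {u_i : i ∈ S \ {m}}`, each spanned
by edge vectors. If `S = {i}`, each partition subspace `span {u_k, u_i}` forces `u_k` and
`u_k + u_i` to be edge vectors unless `u_i` is one; then, extending coordinates to `𝔽₂ⁿ`, every
`u_k` vanishes at a coordinate `x` outside the four-point support of `u_i`, which is absurd for
a basis.

Non-crossing: if two indices `k ≠ k'` lie outside `S`, then `U` is the intersection of the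
neighbours for `S ∪ {k}` and `S ∪ {k'}`, and `π` is the meet of their non-crossing partitions.
Otherwise `|S| ≥ 3`, and for `m ∈ S` the neighbour `U ∩ {u_m-coordinate = 0}` has the partition
obtained from `π` by 2-colouring `i` with the `u_m`-coordinate of `e_i`. A parity argument shows
that such a colouring cuts at most one block of `π`. At a crossing `a < b < c < d` of `π` every
colouring must cut `{a, c}` or `{b, d}`, and two colourings cutting the same block give the same
partition, since its halves must be the points inside and outside the crossing block. So two of
three neighbours would coincide.
-/

open Submodule Set

variable {n : ℕ}

def edgeSetoid (U : Submodule (ZMod 2) (Fin (n - 1) → ZMod 2)) : Setoid (Fin n) where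
  r i j := unitVec n i + unitVec n j ∈ U
  iseqv :=
    { refl := fun i => by simp only [ZModModule.add_self, zero_mem]
      symm := fun h => by rwa [add_comm]
      trans := fun hij hjk =>
        ZModModule.add_add_add_cancel (unitVec n _) _ _ ▸ U.add_mem hij hjk }

/-- Pairing with `χ` after extending `v ∈ 𝔽₂ⁿ⁻¹` to `𝔽₂ⁿ` by the sum of its coordinates, so that
`e_i + e_j ↦ χ i + χ j` also when `i` or `j` is the last index (where `e_n = 0`). -/
noncomputable def parityFunctional (χ : Fin n → ZMod 2) :
    (Fin (n - 1) → ZMod 2) →ₗ[ZMod 2] ZMod 2 :=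
  Fintype.linearCombination (ZMod 2) fun k =>
    χ (k.castLE (n.sub_le 1)) + Function.extend Fin.val χ 0 (n - 1)

lemma parityFunctional_unitVec (χ : Fin n → ZMod 2) (i : Fin n) :
    parityFunctional χ (unitVec n i) = χ i + Function.extend Fin.val χ 0 (n - 1) := by
  simp only [parityFunctional, Fintype.linearCombination_apply, unitVec, ite_smul, one_smul,
    zero_smul]
  rcases lt_or_ge (i : ℕ) (n - 1) with hi | hi
  · rw [Finset.sum_eq_single ⟨i, hi⟩ (fun k _ hk => if_neg fun h => hk (Fin.ext h)) (by simp),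
      if_pos rfl]
    rfl
  · rw [Finset.sum_eq_zero fun k _ => if_neg (by omega), ← Fin.val_injective.extend_apply χ 0 i,
      show (i : ℕ) = n - 1 by omega, CharTwo.add_self_eq_zero]

lemma parityFunctional_unitVec_add (χ : Fin n → ZMod 2) (i j : Fin n) :
    parityFunctional χ (unitVec n i + unitVec n j) = χ i + χ j := by
  rw [map_add, parityFunctional_unitVec, parityFunctional_unitVec, add_add_add_comm,
    CharTwo.add_self_eq_zero, add_zero]

lemma partSubspace_le_ker_parityFunctional {σ : Setoid (Fin n)} {χ : Fin n → ZMod 2}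
    (hχ : ∀ i j, σ.r i j → χ i = χ j) : partSubspace n σ ≤ LinearMap.ker (parityFunctional χ) :=
  span_le.2 <| by
    rintro _ ⟨i, j, -, hij, rfl⟩
    simp [parityFunctional_unitVec_add, hχ i j hij, ZModModule.add_self]

open Classical in
lemma parityFunctional_block_eq_zero {σ : Setoid (Fin n)} {v : Fin (n - 1) → ZMod 2}
    (hv : v ∈ partSubspace n σ) (x : Fin n) :
    parityFunctional (fun y => if σ.r y x then 1 else 0) v = 0 :=
  partSubspace_le_ker_parityFunctional (fun i j hij => by
    simp only [show σ.r i x ↔ σ.r j x from ⟨σ.trans' (σ.symm' hij), σ.trans' hij⟩]) hv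

lemma unitVec_add_mem_partSubspace_iff {σ : Setoid (Fin n)} {i j : Fin n} :
    unitVec n i + unitVec n j ∈ partSubspace n σ ↔ σ.r i j := by
  refine ⟨fun h => ?_, fun h => ?_⟩
  · classical
    have := parityFunctional_block_eq_zero h j
    rw [parityFunctional_unitVec_add, if_pos (σ.refl' j)] at this
    by_contra hij
    simp [hij] at this
  · rcases lt_trichotomy i j with hij | rfl | hij
    · exact subset_span ⟨i, j, hij, h, rfl⟩
    · simp only [ZModModule.add_self, zero_mem]
    · exact add_comm (unitVec n j) _ ▸ subset_span ⟨j, i, hij, σ.symm' h, rfl⟩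

lemma add_add_notMem_partSubspace {σ : Setoid (Fin n)} {x y z w : Fin n} (hy : ¬σ.r y x)
    (hz : ¬σ.r z x) (hw : ¬σ.r w x) :
    (unitVec n x + unitVec n y) + (unitVec n z + unitVec n w) ∉ partSubspace n σ := by
  classical
  intro h
  have := parityFunctional_block_eq_zero h x
  simp [parityFunctional_unitVec_add, hy, hz, hw] at this

lemma edgeSetoid_partSubspace (σ : Setoid (Fin n)) : edgeSetoid (partSubspace n σ) = σ :=
  Setoid.ext fun _ _ => unitVec_add_mem_partSubspace_iff

lemma partSubspace_edgeSetoid_le (U : Submodule (ZMod 2) (Fin (n - 1) → ZMod 2)) :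
    partSubspace n (edgeSetoid U) ≤ U :=
  span_le.2 fun _ ⟨_, _, _, h, hv⟩ => hv ▸ h

lemma partSubspace_mono {σ τ : Setoid (Fin n)} (h : σ ≤ τ) :
    partSubspace n σ ≤ partSubspace n τ :=
  span_mono fun _ ⟨i, j, hij, hσ, hv⟩ => ⟨i, j, hij, h hσ, hv⟩

lemma edgeSetoid_mono {U W : Submodule (ZMod 2) (Fin (n - 1) → ZMod 2)} (h : U ≤ W) :
    edgeSetoid (n := n) U ≤ edgeSetoid W :=
  fun _ _ hU => h hU

lemma edgeSetoid_inf (U W : Submodule (ZMod 2) (Fin (n - 1) → ZMod 2)) :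
    edgeSetoid (n := n) (U ⊓ W) = edgeSetoid U ⊓ edgeSetoid W :=
  rfl

lemma edgeSetoid_inf_ker (U : Submodule (ZMod 2) (Fin (n - 1) → ZMod 2))
    (f : (Fin (n - 1) → ZMod 2) →ₗ[ZMod 2] ZMod 2) :
    edgeSetoid (U ⊓ LinearMap.ker f) = edgeSetoid U ⊓ Setoid.ker (f ∘ unitVec n) :=
  Setoid.ext fun _ _ => and_congr_right' <| by
    show f (unitVec n _ + unitVec n _) = 0 ↔ _
    rw [map_add, CharTwo.add_eq_zero]; rfl

lemma isNCPartitionSubspace_iff {U : Submodule (ZMod 2) (Fin (n - 1) → ZMod 2)} :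
    IsNCPartitionSubspace n U ↔
      IsNonCrossing n (edgeSetoid U) ∧ partSubspace n (edgeSetoid U) = U := by
  refine ⟨?_, fun h => ⟨_, h.1, h.2.symm⟩⟩
  rintro ⟨σ, hσ, rfl⟩
  rw [edgeSetoid_partSubspace]
  exact ⟨hσ, rfl⟩

lemma partSubspace_edgeSetoid_sup {W₁ W₂ : Submodule (ZMod 2) (Fin (n - 1) → ZMod 2)}
    (h₁ : partSubspace n (edgeSetoid W₁) = W₁) (h₂ : partSubspace n (edgeSetoid W₂) = W₂) :
    partSubspace n (edgeSetoid (W₁ ⊔ W₂)) = W₁ ⊔ W₂ :=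
  (partSubspace_edgeSetoid_le _).antisymm <| sup_le
    (h₁.ge.trans (partSubspace_mono (edgeSetoid_mono le_sup_left)))
    (h₂.ge.trans (partSubspace_mono (edgeSetoid_mono le_sup_right)))

lemma partSubspace_edgeSetoid_span_singleton (p q : Fin n) :
    partSubspace n (edgeSetoid (span (ZMod 2) {unitVec n p + unitVec n q})) =
      span (ZMod 2) {unitVec n p + unitVec n q} :=
  (partSubspace_edgeSetoid_le _).antisymm <| span_singleton_le_iff_mem _ _ |>.2 <|
    unitVec_add_mem_partSubspace_iff.2 (mem_span_singleton_self _)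

lemma IsNonCrossing.inf {σ τ : Setoid (Fin n)} (hσ : IsNonCrossing n σ)
    (hτ : IsNonCrossing n τ) : IsNonCrossing n (σ ⊓ τ) :=
  fun a b c d hab hbc hcd hac hbd =>
    ⟨hσ a b c d hab hbc hcd hac.1 hbd.1, hτ a b c d hab hbc hcd hac.2 hbd.2⟩

lemma IsNonCrossing.mem_Ioo_iff {ρ : Setoid (Fin n)} (hρ : IsNonCrossing n ρ)
    {x y z₀ z₁ : Fin n} (hxy : ρ.r x y) (hz : ρ.r z₀ z₁) (hxz : ¬ρ.r x z₀) :
    x ∈ Ioo z₀ z₁ ↔ y ∈ Ioo z₀ z₁ := by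
  suffices key : ∀ x y, ρ.r x y → ¬ρ.r x z₀ → x ∈ Ioo z₀ z₁ → y ∈ Ioo z₀ z₁ from
    ⟨key x y hxy hxz, key y x (ρ.symm' hxy) fun h => hxz (ρ.trans' hxy h)⟩
  rintro x y hxy hxz ⟨h₀, h₁⟩
  by_contra hy
  have hy₀ : y ≠ z₀ := by rintro rfl; exact hxz hxy
  have hy₁ : y ≠ z₁ := by rintro rfl; exact hxz (ρ.trans' hxy (ρ.symm' hz))
  rcases hy₀.lt_or_gt with hy₀ | hy₀
  · exact hxz (ρ.trans' hxy (hρ y z₀ x z₁ hy₀ h₀ h₁ (ρ.symm' hxy) hz))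
  · have hy₁ : z₁ < y := lt_of_le_of_ne (not_lt.1 fun h => hy ⟨hy₀, h⟩) hy₁.symm
    exact hxz (ρ.symm' (hρ z₀ x z₁ y h₀ h₁ hy₁ hz hxy))

/-- `g` is constant on every block of `π` but possibly one. -/
def SplitsAtMostOneBlock {α β : Type*} (π : Setoid α) (g : α → β) : Prop :=
  ∀ ⦃x y z w⦄, π.r x y → π.r z w → g x ≠ g y → g z ≠ g w → π.r x z

lemma inf_ker_rel_iff {α : Type*} {π : Setoid α} {g : α → ZMod 2} {a x y : α} (hx : π.r a x)
    (hy : π.r a y) :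
    (π ⊓ Setoid.ker g).r x y ↔ ((π ⊓ Setoid.ker g).r a x ↔ (π ⊓ Setoid.ker g).r a y) := by
  have key : ∀ p q r : ZMod 2, q = r ↔ (p = q ↔ p = r) := by decide
  show π.r x y ∧ g x = g y ↔ (π.r a x ∧ g a = g x ↔ π.r a y ∧ g a = g y)
  simp only [hx, hy, π.trans' (π.symm' hx) hy, true_and]
  exact key _ _ _

lemma inf_ker_rel_iff_of_crossing {π : Setoid (Fin n)} {g : Fin n → ZMod 2}
    (hNC : IsNonCrossing n (π ⊓ Setoid.ker g)) {α γ z₀ z₁ x : Fin n} (hαγ : π.r α γ)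
    (hg : g α ≠ g γ) (hz : (π ⊓ Setoid.ker g).r z₀ z₁) (hαz : ¬π.r α z₀)
    (hcross : α ∈ Ioo z₀ z₁ ↔ γ ∉ Ioo z₀ z₁) (hx : π.r α x) :
    (π ⊓ Setoid.ker g).r α x ↔ (α ∈ Ioo z₀ z₁ ↔ x ∈ Ioo z₀ z₁) := by
  refine ⟨fun h => hNC.mem_Ioo_iff h hz fun h' => hαz h'.1, fun h => ?_⟩
  by_contra hαx
  have key : ∀ p q r : ZMod 2, p ≠ q → p ≠ r → q = r := by decide
  have hγx : (π ⊓ Setoid.ker g).r γ x :=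
    ⟨π.trans' (π.symm' hαγ) hx, key _ _ _ hg fun h' => hαx ⟨hx, h'⟩⟩
  have := hNC.mem_Ioo_iff hγx hz fun h' => hαz (π.trans' hαγ h'.1)
  tauto

lemma inf_ker_eq_of_crossing {π : Setoid (Fin n)} {g g' : Fin n → ZMod 2}
    (hNC : IsNonCrossing n (π ⊓ Setoid.ker g)) (hNC' : IsNonCrossing n (π ⊓ Setoid.ker g'))
    (hg : SplitsAtMostOneBlock π g) (hg' : SplitsAtMostOneBlock π g') {α γ z₀ z₁ : Fin n}
    (hαγ : π.r α γ) (hz : π.r z₀ z₁) (hαz : ¬π.r α z₀)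
    (hcross : α ∈ Ioo z₀ z₁ ↔ γ ∉ Ioo z₀ z₁) (hgα : g α ≠ g γ) (hg'α : g' α ≠ g' γ) :
    π ⊓ Setoid.ker g = π ⊓ Setoid.ker g' := by
  have hz' : ∀ {f : Fin n → ZMod 2}, SplitsAtMostOneBlock π f → f α ≠ f γ →
      (π ⊓ Setoid.ker f).r z₀ z₁ :=
    fun hf hfα => ⟨hz, by_contra fun h => hαz (hf hαγ hz hfα h)⟩
  refine Setoid.ext fun x y => ?_
  show (π ⊓ Setoid.ker g).r x y ↔ (π ⊓ Setoid.ker g').r x y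
  by_cases hxy : π.r x y
  · by_cases hαx : π.r α x
    · have hαy := π.trans' hαx hxy
      rw [inf_ker_rel_iff hαx hαy, inf_ker_rel_iff hαx hαy,
        inf_ker_rel_iff_of_crossing hNC hαγ hgα (hz' hg hgα) hαz hcross hαx,
        inf_ker_rel_iff_of_crossing hNC hαγ hgα (hz' hg hgα) hαz hcross hαy,
        inf_ker_rel_iff_of_crossing hNC' hαγ hg'α (hz' hg' hg'α) hαz hcross hαx,
        inf_ker_rel_iff_of_crossing hNC' hαγ hg'α (hz' hg' hg'α) hαz hcross hαy]
    · have hconst : ∀ {f : Fin n → ZMod 2}, SplitsAtMostOneBlock π f → f α ≠ f γ → f x = f y :=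
        fun hf hfα => by_contra fun h => hαx (hf hαγ hxy hfα h)
      exact iff_of_true ⟨hxy, hconst hg hgα⟩ ⟨hxy, hconst hg' hg'α⟩
  · exact iff_of_false (fun h => hxy h.1) (fun h => hxy h.1)

lemma IsNonCrossing.of_inf_ker {ι : Type*} {π : Setoid (Fin n)} {g : ι → Fin n → ZMod 2}
    {s : Set ι} (hs : 2 < s.ncard) (hNC : ∀ m ∈ s, IsNonCrossing n (π ⊓ Setoid.ker (g m)))
    (hg : ∀ m ∈ s, SplitsAtMostOneBlock π (g m))
    (hinj : s.InjOn fun m => π ⊓ Setoid.ker (g m)) : IsNonCrossing n π := by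
  intro a b c d hab hbc hcd hac hbd
  by_contra hab'
  have hsplit : ∀ m ∈ s, g m a ≠ g m c ∨ g m b ≠ g m d := by
    intro m hm
    by_contra! h
    exact hab' (hNC m hm a b c d hab hbc hcd ⟨hac, h.1⟩ ⟨hbd, h.2⟩).1
  have hac' : ∀ m ∈ s, ∀ m' ∈ s, g m a ≠ g m c → g m' a ≠ g m' c → m = m' :=
    fun m hm m' hm' h h' => hinj hm hm' <| inf_ker_eq_of_crossing (hNC m hm) (hNC m' hm')
      (hg m hm) (hg m' hm') hac hbd hab' (by simp [hab.le, hbc, hcd]) h h'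
  have hbd' : ∀ m ∈ s, ∀ m' ∈ s, g m b ≠ g m d → g m' b ≠ g m' d → m = m' :=
    fun m hm m' hm' h h' => hinj hm hm' <| inf_ker_eq_of_crossing (hNC m hm) (hNC m' hm')
      (hg m hm) (hg m' hm') hbd hac (fun h => hab' (π.symm' h)) (by simp [hab, hbc, hcd.le])
      h h'
  obtain ⟨m₁, m₂, m₃, h₁, h₂, h₃, h₁₂, h₁₃, h₂₃⟩ :=
    (Set.two_lt_ncard_iff (Set.finite_of_ncard_pos (by omega))).1 hs
  rcases hsplit m₁ h₁ with s₁ | s₁ <;> rcases hsplit m₂ h₂ with s₂ | s₂ <;>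
    rcases hsplit m₃ h₃ with s₃ | s₃
  all_goals first
    | exact h₁₂ (hac' _ h₁ _ h₂ s₁ s₂) | exact h₁₃ (hac' _ h₁ _ h₃ s₁ s₃)
    | exact h₂₃ (hac' _ h₂ _ h₃ s₂ s₃) | exact h₁₂ (hbd' _ h₁ _ h₂ s₁ s₂)
    | exact h₁₃ (hbd' _ h₁ _ h₃ s₁ s₃) | exact h₂₃ (hbd' _ h₂ _ h₃ s₂ s₃)

lemma splitsAtMostOneBlock_of_inf_ker {U : Submodule (ZMod 2) (Fin (n - 1) → ZMod 2)}
    {f : (Fin (n - 1) → ZMod 2) →ₗ[ZMod 2] ZMod 2}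
    (h : partSubspace n (edgeSetoid (U ⊓ LinearMap.ker f)) = U ⊓ LinearMap.ker f) :
    SplitsAtMostOneBlock (edgeSetoid U) (f ∘ unitVec n) := by
  intro x y z w hxy hzw hfxy hfzw
  by_contra hxz
  have hσ : ∀ {i j}, (edgeSetoid (U ⊓ LinearMap.ker f)).r i j →
      (edgeSetoid U).r i j ∧ f (unitVec n i) = f (unitVec n j) := fun h' => by
    rwa [edgeSetoid_inf_ker] at h'
  have key : ∀ p q r s : ZMod 2, p ≠ q → r ≠ s → p + q + (r + s) = 0 := by decide
  refine add_add_notMem_partSubspace (fun h' => hfxy (hσ h').2.symm)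
    (fun h' => hxz ((edgeSetoid U).symm' (hσ h').1))
    (fun h' => hxz ((edgeSetoid U).symm' ((edgeSetoid U).trans' hzw (hσ h').1))) ?_
  rw [h]
  refine ⟨U.add_mem hxy hzw, ?_⟩
  rw [SetLike.mem_coe, LinearMap.mem_ker, map_add, map_add, map_add]
  exact key _ _ _ _ hfxy hfzw

lemma isNonCrossing_edgeSetoid_of_inf_ker {ι : Type*}
    {U : Submodule (ZMod 2) (Fin (n - 1) → ZMod 2)}
    {f : ι → (Fin (n - 1) → ZMod 2) →ₗ[ZMod 2] ZMod 2} {s : Set ι} (hs : 2 < s.ncard)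
    (hf : ∀ m ∈ s, IsNCPartitionSubspace n (U ⊓ LinearMap.ker (f m)))
    (hinj : s.InjOn fun m => U ⊓ LinearMap.ker (f m)) : IsNonCrossing n (edgeSetoid U) := by
  simp only [isNCPartitionSubspace_iff, edgeSetoid_inf_ker] at hf
  refine IsNonCrossing.of_inf_ker (g := fun m => f m ∘ unitVec n) hs (fun m hm => (hf m hm).1)
    (fun m hm => splitsAtMostOneBlock_of_inf_ker ?_) fun m hm m' hm' heq => hinj hm hm' ?_
  · rw [edgeSetoid_inf_ker]; exact (hf m hm).2
  · simp only at heq ⊢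
    rw [← (hf m hm).2, ← (hf m' hm').2, heq]

namespace Module.Basis

variable {ι R M : Type*} [Semiring R] [AddCommMonoid M] [Module R M] (b : Basis ι R M)

lemma span_image_inter (s t : Set ι) :
    span R (b '' (s ∩ t)) = span R (b '' s) ⊓ span R (b '' t) := by
  ext
  simp only [mem_inf, mem_span_image, subset_inter_iff]

lemma span_image_diff_singleton (s : Set ι) (m : ι) :
    span R (b '' (s \ {m})) = span R (b '' s) ⊓ LinearMap.ker (b.coord m) := by
  ext
  simp [mem_span_image, subset_sdiff, Finsupp.mem_support_iff]

end Module.Basis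

lemma ZMod.two_eq_zero_or_one (a : ZMod 2) : a = 0 ∨ a = 1 := by
  revert a
  decide

section ZModTwo

variable {M : Type*} [AddCommGroup M] [Module (ZMod 2) M]

lemma mem_span_singleton_zmodTwo {x v : M} : x ∈ span (ZMod 2) {v} ↔ x = 0 ∨ x = v := by
  rw [mem_span_singleton]
  constructor
  · rintro ⟨a, rfl⟩
    rcases a.two_eq_zero_or_one with rfl | rfl <;> simp
  · rintro (rfl | rfl)
    exacts [⟨0, zero_smul _ _⟩, ⟨1, one_smul _ _⟩]

lemma mem_span_pair_zmodTwo {x v w : M} :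
    x ∈ span (ZMod 2) {v, w} ↔ x = 0 ∨ x = v ∨ x = w ∨ x = v + w := by
  rw [mem_span_pair]
  constructor
  · rintro ⟨a, b, rfl⟩
    rcases a.two_eq_zero_or_one with rfl | rfl <;> rcases b.two_eq_zero_or_one with rfl | rfl <;>
      simp
  · rintro (rfl | rfl | rfl | rfl)
    exacts [⟨0, 0, by simp⟩, ⟨1, 0, by simp⟩, ⟨0, 1, by simp⟩, ⟨1, 1, by simp⟩]

end ZModTwo

lemma exists_unitVec_add_of_span_pair {σ : Setoid (Fin n)} {v w : Fin (n - 1) → ZMod 2}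
    (hσ : partSubspace n σ = span (ZMod 2) {w, v})
    (hv : ∀ p q : Fin n, v ≠ unitVec n p + unitVec n q) (hv₀ : v ≠ 0) (hw₀ : w ≠ 0)
    (hwv : w ≠ v) :
    (∃ p q : Fin n, w = unitVec n p + unitVec n q) ∧
      ∃ p q : Fin n, w + v = unitVec n p + unitVec n q := by
  have hedge : ∀ p q, σ.r p q → unitVec n p + unitVec n q = 0 ∨
      unitVec n p + unitVec n q = w ∨ unitVec n p + unitVec n q = w + v := by
    intro p q hpq
    rcases mem_span_pair_zmodTwo.1 (hσ ▸ unitVec_add_mem_partSubspace_iff.2 hpq) with h | h | h | h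
    exacts [Or.inl h, Or.inr (Or.inl h), absurd h.symm (hv p q), Or.inr (Or.inr h)]
  have hle : ∀ x, (∀ p q, σ.r p q → unitVec n p + unitVec n q ∈ span (ZMod 2) {x}) →
      v = 0 ∨ v = x := fun x hx =>
    mem_span_singleton_zmodTwo.1 <| span_le.2 (by rintro _ ⟨p, q, -, hpq, rfl⟩; exact hx p q hpq)
      (hσ ▸ subset_span (by simp))
  constructor
  · by_contra! hw
    refine (hle (w + v) fun p q hpq => ?_).elim hv₀ fun h => hw₀ (right_eq_add.1 h)
    rcases hedge p q hpq with h | h | h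
    exacts [h ▸ zero_mem _, absurd h.symm (hw p q), h ▸ mem_span_singleton_self _]
  · by_contra! hwv'
    refine (hle w fun p q hpq => ?_).elim hv₀ fun h => hwv h.symm
    rcases hedge p q hpq with h | h | h
    exacts [h ▸ zero_mem _, h ▸ mem_span_singleton_self _, absurd h.symm (hwv' p q)]

lemma exists_basis_eq_unitVec_add (hn : 5 ≤ n)
    (b : Module.Basis (Fin (n - 1)) (ZMod 2) (Fin (n - 1) → ZMod 2)) (i : Fin (n - 1))
    (h : ∀ k ≠ i, partSubspace n (edgeSetoid (span (ZMod 2) (b '' {k, i}))) =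
      span (ZMod 2) (b '' {k, i})) :
    ∃ p q : Fin n, b i = unitVec n p + unitVec n q := by
  by_contra! hi
  have hedges : ∀ k ≠ i, (∃ p q : Fin n, b k = unitVec n p + unitVec n q) ∧
      ∃ p q : Fin n, b k + b i = unitVec n p + unitVec n q := fun k hk =>
    exists_unitVec_add_of_span_pair (by rw [h k hk, image_pair]) hi (b.ne_zero i) (b.ne_zero k)
      (b.injective.ne hk)
  have hsplit : ∀ k, b i = b k + (b k + b i) := fun k => by
    rw [← add_assoc, ZModModule.add_self, zero_add]
  have : Nontrivial (Fin (n - 1)) := Fin.nontrivial_iff_two_le.2 (by omega)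
  obtain ⟨k, hk⟩ := exists_ne i
  obtain ⟨⟨p, q, hpq⟩, r, s, hrs⟩ := hedges k hk
  obtain ⟨x, -, hx⟩ := Finset.exists_mem_notMem_of_card_lt_card (s := {p, q, r, s})
    (t := Finset.univ) (Finset.card_le_four.trans_lt (by simpa using by omega))
  -- the `x`-coordinate, extended to `𝔽₂ⁿ`, vanishes on every `b k`, hence everywhere
  set φ := parityFunctional fun y => if y = x then (1 : ZMod 2) else 0
  have hφ : ∀ y z, φ (unitVec n y + unitVec n z) ≠ 0 →
      ∃ z', unitVec n y + unitVec n z = unitVec n x + unitVec n z' := by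
    intro y z hyz
    rw [parityFunctional_unitVec_add] at hyz
    by_cases hy : y = x
    · exact ⟨z, hy ▸ rfl⟩
    by_cases hz : z = x
    · exact ⟨y, hz ▸ add_comm _ _⟩
    simp [hy, hz] at hyz
  have hφi : φ (b i) = 0 := by
    simp only [Finset.mem_insert, Finset.mem_singleton, not_or] at hx
    rw [hsplit k, hrs, hpq, map_add, parityFunctional_unitVec_add, parityFunctional_unitVec_add]
    simp [Ne.symm hx.1, Ne.symm hx.2.1, Ne.symm hx.2.2.1, Ne.symm hx.2.2.2]
  have hφb : ∀ k, φ (b k) = 0 := by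
    intro k
    rcases eq_or_ne k i with rfl | hk
    · exact hφi
    obtain ⟨⟨p, q, hpq⟩, r, s, hrs⟩ := hedges k hk
    by_contra hk₀
    obtain ⟨q', hq'⟩ := hφ p q (hpq ▸ hk₀)
    obtain ⟨s', hs'⟩ := hφ r s (by rwa [← hrs, map_add, hφi, add_zero])
    refine hi q' s' ?_
    rw [hsplit k, hrs, hpq, hq', hs', add_comm (unitVec n x), ZModModule.add_add_add_cancel]
  have hφ₀ : φ = 0 := b.ext hφb
  have : Nontrivial (Fin n) := Fin.nontrivial_iff_two_le.2 (by omega)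
  obtain ⟨y, hy⟩ := exists_ne x
  have := LinearMap.congr_fun hφ₀ (unitVec n x + unitVec n y)
  simp [φ, parityFunctional_unitVec_add, hy] at this

lemma partSubspace_edgeSetoid_span_image_singleton (hn : 5 ≤ n)
    (b : Module.Basis (Fin (n - 1)) (ZMod 2) (Fin (n - 1) → ZMod 2)) (i : Fin (n - 1))
    (h : ∀ k ≠ i, partSubspace n (edgeSetoid (span (ZMod 2) (b '' {k, i}))) =
      span (ZMod 2) (b '' {k, i})) :
    partSubspace n (edgeSetoid (span (ZMod 2) (b '' {i}))) = span (ZMod 2) (b '' {i}) := by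
  obtain ⟨p, q, hpq⟩ := exists_basis_eq_unitVec_add hn b i h
  rw [image_singleton, hpq]
  exact partSubspace_edgeSetoid_span_singleton p q

lemma isNonCrossing_edgeSetoid_span_image_of_insert
    (b : Module.Basis (Fin (n - 1)) (ZMod 2) (Fin (n - 1) → ZMod 2)) {S : Set (Fin (n - 1))}
    {k k' : Fin (n - 1)} (hk : k ∉ S) (hk' : k' ∉ S) (hkk' : k ≠ k')
    (h : IsNCPartitionSubspace n (span (ZMod 2) (b '' insert k S)))
    (h' : IsNCPartitionSubspace n (span (ZMod 2) (b '' insert k' S))) :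
    IsNonCrossing n (edgeSetoid (span (ZMod 2) (b '' S))) := by
  have hS : S = insert k S ∩ insert k' S := by
    ext j
    simp only [mem_inter_iff, mem_insert_iff]
    constructor
    · tauto
    · rintro ⟨rfl | h, rfl | h'⟩ <;> tauto
  rw [hS, b.span_image_inter, edgeSetoid_inf]
  exact (isNCPartitionSubspace_iff.1 h).1.inf (isNCPartitionSubspace_iff.1 h').1

lemma isNonCrossing_edgeSetoid_span_image_of_diff
    (b : Module.Basis (Fin (n - 1)) (ZMod 2) (Fin (n - 1) → ZMod 2)) {S : Set (Fin (n - 1))}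
    (hS : 2 < S.ncard) (h : ∀ m ∈ S, IsNCPartitionSubspace n (span (ZMod 2) (b '' (S \ {m})))) :
    IsNonCrossing n (edgeSetoid (span (ZMod 2) (b '' S))) := by
  refine isNonCrossing_edgeSetoid_of_inf_ker (f := b.coord) hS
    (fun m hm => b.span_image_diff_singleton S m ▸ h m hm) fun m hm m' hm' heq => ?_
  by_contra hmm'
  simp only [← b.span_image_diff_singleton] at heq
  refine b.linearIndependent.notMem_span_image (s := S \ {m'}) (x := m') (by simp) ?_
  exact heq ▸ subset_span ⟨m', ⟨hm', Ne.symm hmm'⟩, rfl⟩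

lemma partSubspace_edgeSetoid_span_image_of_diff
    (b : Module.Basis (Fin (n - 1)) (ZMod 2) (Fin (n - 1) → ZMod 2)) {S : Set (Fin (n - 1))}
    {m k : Fin (n - 1)} (hmk : m ≠ k)
    (hm : IsNCPartitionSubspace n (span (ZMod 2) (b '' (S \ {m}))))
    (hk : IsNCPartitionSubspace n (span (ZMod 2) (b '' (S \ {k})))) :
    partSubspace n (edgeSetoid (span (ZMod 2) (b '' S))) = span (ZMod 2) (b '' S) := by
  have hS : S = S \ {m} ∪ S \ {k} := by
    rw [← sdiff_inter, singleton_inter_eq_empty.2 (by simpa using hmk), sdiff_empty]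
  rw [hS, image_union, span_union]
  exact partSubspace_edgeSetoid_sup (isNCPartitionSubspace_iff.1 hm).2
    (isNCPartitionSubspace_iff.1 hk).2

/-- Link Property for non-crossing partitions: let `n ≥ 5`, let `u₁, …, u_{n-1}` be
a basis of `𝔽₂ⁿ⁻¹` and let `U` be the span of `{uᵢ : i ∈ S}` for a proper nonempty
subset `S`.  If for every proper nonempty `S'` comparable to (and distinct from)
`S` the subspace spanned by `{uᵢ : i ∈ S'}` is a non-crossing partition subspace,
then so is `U`. -/
theorem linkProperty_noncrossing (n : ℕ) (hn : 5 ≤ n)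
    (u : Fin (n - 1) → Fin (n - 1) → ZMod 2)
    (hu1 : LinearIndependent (ZMod 2) u)
    (hu2 : Submodule.span (ZMod 2) (Set.range u) = ⊤)
    (S : Set (Fin (n - 1))) (hS1 : S ≠ ∅) (hS2 : S ≠ Set.univ)
    (h : ∀ S' : Set (Fin (n - 1)), S' ≠ ∅ → S' ≠ Set.univ → S' ≠ S →
      S' ⊂ S ∨ S ⊂ S' →
      IsNCPartitionSubspace n (Submodule.span (ZMod 2) (u '' S'))) :
    IsNCPartitionSubspace n (Submodule.span (ZMod 2) (u '' S)) := by
  obtain ⟨b, rfl⟩ : ∃ b : Module.Basis (Fin (n - 1)) (ZMod 2) (Fin (n - 1) → ZMod 2), ⇑b = u :=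
    ⟨.mk hu1 hu2.ge, Module.Basis.coe_mk _ _⟩
  have hcard : S.ncard + Sᶜ.ncard = n - 1 := by simpa using S.ncard_add_ncard_compl
  have hdel : ∀ m ∈ S, 1 < S.ncard →
      IsNCPartitionSubspace n (span (ZMod 2) (b '' (S \ {m}))) := fun m hm hS =>
    have ⟨m', hm', hm'm⟩ := exists_ne_of_one_lt_ncard hS m
    h _ (nonempty_of_mem (show m' ∈ S \ {m} from ⟨hm', hm'm⟩)).ne_empty
      (fun hU => hS2 (eq_univ_of_univ_subset (hU ▸ sdiff_subset)))
      (sdiff_singleton_ssubset.2 hm).ne (Or.inl (sdiff_singleton_ssubset.2 hm))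
  have hins : ∀ k ∉ S, 1 < Sᶜ.ncard →
      IsNCPartitionSubspace n (span (ZMod 2) (b '' insert k S)) := fun k hk hSc =>
    have ⟨k', hk', hk'k⟩ := exists_ne_of_one_lt_ncard hSc k
    h _ (insert_nonempty k S).ne_empty (fun hU => (hU ▸ mem_univ k').elim hk'k hk')
      (ssubset_insert hk).ne' (Or.inr (ssubset_insert hk))
  refine isNCPartitionSubspace_iff.2 ⟨?_, ?_⟩
  · by_cases hSc : 1 < Sᶜ.ncard
    · obtain ⟨k, k', hk, hk', hkk'⟩ := (one_lt_ncard_iff).1 hSc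
      exact isNonCrossing_edgeSetoid_span_image_of_insert b hk hk' hkk' (hins k hk hSc)
        (hins k' hk' hSc)
    · exact isNonCrossing_edgeSetoid_span_image_of_diff b (by omega) fun m hm =>
        hdel m hm (by omega)
  · rcases Nat.lt_or_ge 1 S.ncard with hS | hS
    · obtain ⟨m, k, hm, hk, hmk⟩ := (one_lt_ncard_iff).1 hS
      exact partSubspace_edgeSetoid_span_image_of_diff b hmk (hdel m hm hS) (hdel k hk hS)
    · obtain ⟨i, rfl⟩ := ncard_eq_one.1 <| hS.antisymm <|
        (ncard_pos).2 (nonempty_iff_ne_empty.2 hS1)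
      rw [ncard_singleton] at hcard
      exact partSubspace_edgeSetoid_span_image_singleton hn b i fun k hk =>
        (isNCPartitionSubspace_iff.1 (hins k hk (by omega))).2
end
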